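/- arXiv:2210.06107 — 6 statements merged into one kernel-verified Lean document; each statement's English description precedes it below -/
import Mathlib

section
/- In the (ε, H)-smoothed auto-bidding game, the smoothed allocation function is continuous: for each good j, the map sending the multiplier vector α to the allocation x_{i,j} = (α_i v_{i,j} − (b_j* − ε)) / ∑_{k ∈ S_j} (α_k v_{k,j} − (b_j* − ε)) for i ∈ S_j (and x_{i,j} = 0 otherwise), where b_j* = max_k α_k v_{k,j} and S_j = {i : α_i v_{i,j} ≥ b_j* − ε}, is a continuous function of α on the strategy space ∏_i [1 + 2ε/v_i*, A], and satisfies ∑_i x_{i,j} = 1. -/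
/-- Highest bid `b_j* = max_k α_k v_{k,j}` for good `j`. -/
noncomputable def bstar {n m : ℕ} [NeZero n] (v : Fin n → Fin m → ℝ)
    (α : Fin n → ℝ) (j : Fin m) : ℝ :=
  Finset.univ.sup' Finset.univ_nonempty fun k => α k * v k j

/-- The smoothed allocation of good `j` to bidder `i`: bidders within `ε` of the highest bid
(the set `S_j`) share the good proportionally to `α_i v_{i,j} − (b_j* − ε)`. -/
noncomputable def xalloc {n m : ℕ} [NeZero n] (v : Fin n → Fin m → ℝ) (ε : ℝ)
    (α : Fin n → ℝ) (j : Fin m) (i : Fin n) : ℝ :=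
  if bstar v α j - ε ≤ α i * v i j then
    (α i * v i j - (bstar v α j - ε)) /
      ∑ k ∈ Finset.univ.filter fun k => bstar v α j - ε ≤ α k * v k j,
        (α k * v k j - (bstar v α j - ε))
  else 0

/-- `v_i* = min{v_{i,j} : v_{i,j} > 0}`. -/
noncomputable def vstar {n m : ℕ} (v : Fin n → Fin m → ℝ) (i : Fin n) : ℝ :=
  sInf {r | ∃ j, v i j = r ∧ 0 < r}

lemma bstar_continuous {n m : ℕ} [NeZero n] (v : Fin n → Fin m → ℝ) (j : Fin m) :
    Continuous fun α : Fin n → ℝ => bstar v α j := by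
  apply Continuous.finset_sup'_apply Finset.univ_nonempty
  intro i _
  exact (continuous_apply i).mul continuous_const

/-- The denominator, rewritten as a sum of maxes. -/
lemma denom_eq {n m : ℕ} [NeZero n] (v : Fin n → Fin m → ℝ) (ε : ℝ)
    (α : Fin n → ℝ) (j : Fin m) :
    (∑ k ∈ Finset.univ.filter fun k => bstar v α j - ε ≤ α k * v k j,
        (α k * v k j - (bstar v α j - ε)))
      = ∑ k, max (α k * v k j - (bstar v α j - ε)) 0 := by
  rw [Finset.sum_filter]
  refine Finset.sum_congr rfl fun k _ => ?_
  by_cases h : bstar v α j - ε ≤ α k * v k j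
  · rw [if_pos h, max_eq_left (by linarith)]
  · rw [if_neg h, max_eq_right (by push_neg at h; linarith)]

lemma denom_ge {n m : ℕ} [NeZero n] (v : Fin n → Fin m → ℝ) {ε : ℝ} (hε : 0 < ε)
    (α : Fin n → ℝ) (j : Fin m) :
    ε ≤ ∑ k, max (α k * v k j - (bstar v α j - ε)) 0 := by
  obtain ⟨k, -, hk⟩ := Finset.exists_mem_eq_sup' (Finset.univ_nonempty (α := Fin n))
    (fun k => α k * v k j)
  have hb : bstar v α j = α k * v k j := hk
  calc ε = max (α k * v k j - (bstar v α j - ε)) 0 := by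
        rw [hb, max_eq_left (by linarith)]; ring
    _ ≤ _ := Finset.single_le_sum (f := fun i => max (α i * v i j - (bstar v α j - ε)) 0)
        (fun i _ => le_max_right _ _) (Finset.mem_univ k)

lemma xalloc_eq {n m : ℕ} [NeZero n] (v : Fin n → Fin m → ℝ) (ε : ℝ)
    (α : Fin n → ℝ) (j : Fin m) (i : Fin n) :
    xalloc v ε α j i
      = max (α i * v i j - (bstar v α j - ε)) 0 /
          ∑ k, max (α k * v k j - (bstar v α j - ε)) 0 := by
  rw [xalloc, denom_eq]
  by_cases h : bstar v α j - ε ≤ α i * v i j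
  · rw [if_pos h, max_eq_left (by linarith)]
  · rw [if_neg h, max_eq_right (by push_neg at h; linarith), zero_div]

/-- in the `(ε, H)`-smoothed game, the smoothed allocation of each good to each
bidder is a continuous function of the multiplier vector `α` on the strategy space
`∏_i [1 + 2ε/v_i*, A]`, and the allocations of each good sum to one there. -/
theorem stmt3 {n m : ℕ} [NeZero n] (v : Fin n → Fin m → ℝ)
    (hv : ∀ i j, 0 ≤ v i j) (hpos : ∀ j, ∃ i, 0 < v i j) (hval : ∀ i, ∃ j, 0 < v i j)
    (ε A : ℝ) (hε : 0 < ε) :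
    (∀ (j : Fin m) (i : Fin n),
      ContinuousOn (fun α => xalloc v ε α j i)
        {α : Fin n → ℝ | ∀ k, 1 + 2 * ε / vstar v k ≤ α k ∧ α k ≤ A}) ∧
    (∀ (j : Fin m),
      ∀ α ∈ {α : Fin n → ℝ | ∀ k, 1 + 2 * ε / vstar v k ≤ α k ∧ α k ≤ A},
        ∑ i, xalloc v ε α j i = 1) := by
  have hD : ∀ (α : Fin n → ℝ) (j : Fin m),
      (∑ k, max (α k * v k j - (bstar v α j - ε)) 0) ≠ 0 := fun α j =>
    ne_of_gt (lt_of_lt_of_le hε (denom_ge v hε α j))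
  constructor
  · intro j i
    apply Continuous.continuousOn
    simp only [xalloc_eq v ε _ j i]
    have hnum : ∀ k : Fin n, Continuous fun α : Fin n → ℝ =>
        max (α k * v k j - (bstar v α j - ε)) 0 :=
      fun k => (((continuous_apply k).mul continuous_const).sub
        ((bstar_continuous v j).sub continuous_const)).max continuous_const
    exact (hnum i).div (continuous_finset_sum _ fun k _ => hnum k) (fun α => hD α j)
  · intro j α _
    simp only [xalloc_eq v ε α j]
    rw [← Finset.sum_div, div_self (hD α j)]
end

section
/- In the (ε, H)-smoothed game, a bidder bidding at its minimum multiplier incurs real debt at most m·ε·(2·max_{k,j} v_{k,j} / v_i* + 1): for each good j that bidder i wins a positive fraction of when α_i = 1 + 2ε/v_i*, the per-good debt x_{i,j}(p_{i,j} − v_{i,j}) is at most ε(2 max_{k,j} v_{k,j}/v_i* + 1), since either p_{i,j} < v_{i,j} + ε and the debt is negative or bounded by ε, or x_{i,j} > 0 requires p_{i,j} ≤ α_i v_{i,j} + ε ≤ v_{i,j} + 2ε·max_j v_{i,j}/v_i* + ε. Consequently, for sufficiently small ε the total debt (real debt plus artificial debt α_i ε − ε^{1/2}) is negative at the minimum multiplier.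 -/
/-- `max_{k,j} v_{k,j}`. -/
noncomputable def vmax {n m : ℕ} [NeZero n] [NeZero m] (v : Fin n → Fin m → ℝ) : ℝ :=
  Finset.univ.sup' Finset.univ_nonempty fun q : Fin n × Fin m => v q.1 q.2

/-- `p_{i,j}`: the highest bid on good `j` among bidders other than `i` (0 if none). -/
noncomputable def pbid {n m : ℕ} (v : Fin n → Fin m → ℝ)
    (α : Fin n → ℝ) (i : Fin n) (j : Fin m) : ℝ :=
  sSup (insert 0 {b | ∃ k, k ≠ i ∧ b = α k * v k j})

/-! At the minimum multiplier `α_i = 1 + t` with `t = 2ε/v_i*`, a positive share of good `j`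
forces `p_{i,j} ≤ b_j* ≤ α_i v_{i,j} + ε`, so the debt per unit is at most
`t v_{i,j} + ε ≤ t · max v + ε`; since the share is at most `1`, summing over the `m` goods gives
the real-debt bound, which is `O(ε)`. The artificial debt is `ε + O(ε²) - √ε`, and `√ε`
dominates every `O(ε)` term as `ε → 0`. -/

open Finset

lemma vstar_nonneg {n m : ℕ} (v : Fin n → Fin m → ℝ) (i : Fin n) : 0 ≤ vstar v i :=
  Real.sInf_nonneg fun _ ⟨_, _, hr⟩ => hr.le

lemma le_vmax {n m : ℕ} [NeZero n] [NeZero m] (v : Fin n → Fin m → ℝ) (k : Fin n) (j : Fin m) :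
    v k j ≤ vmax v :=
  le_sup' (fun q : Fin n × Fin m => v q.1 q.2) (mem_univ (k, j))

lemma vmax_nonneg {n m : ℕ} [NeZero n] [NeZero m] {v : Fin n → Fin m → ℝ}
    (hv : ∀ k j, 0 ≤ v k j) : 0 ≤ vmax v :=
  (hv 0 0).trans (le_vmax v 0 0)

section SmoothedGame

variable {n m : ℕ} [NeZero n] {v : Fin n → Fin m → ℝ} {ε : ℝ} {α : Fin n → ℝ}
  {i : Fin n} {j : Fin m}

lemma le_bstar (k : Fin n) : α k * v k j ≤ bstar v α j :=
  le_sup' (fun k => α k * v k j) (mem_univ k)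

lemma pbid_le_bstar (h : 0 ≤ bstar v α j) : pbid v α i j ≤ bstar v α j := by
  refine csSup_le ⟨0, Set.mem_insert _ _⟩ ?_
  rintro b (rfl | ⟨k, -, rfl⟩)
  · exact h
  · exact le_bstar k

variable (v ε α i j) in
lemma xalloc_mem_Icc : xalloc v ε α j i ∈ Set.Icc 0 1 := by
  unfold xalloc
  split_ifs with hi
  · have hnum : 0 ≤ α i * v i j - (bstar v α j - ε) := sub_nonneg.2 hi
    have hden : α i * v i j - (bstar v α j - ε) ≤
        ∑ k ∈ univ.filter fun k => bstar v α j - ε ≤ α k * v k j,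
          (α k * v k j - (bstar v α j - ε)) :=
      single_le_sum (f := fun k => α k * v k j - (bstar v α j - ε))
        (fun k hk => sub_nonneg.2 (mem_filter.1 hk).2) (mem_filter.2 ⟨mem_univ i, hi⟩)
    exact ⟨div_nonneg hnum (hnum.trans hden), div_le_one_of_le₀ hden (hnum.trans hden)⟩
  · exact ⟨le_rfl, zero_le_one⟩

lemma bstar_sub_le_of_xalloc_ne_zero (hx : xalloc v ε α j i ≠ 0) :
    bstar v α j - ε ≤ α i * v i j := by
  by_contra h
  exact hx (by rw [xalloc, if_neg h])

lemma pbid_le_of_xalloc_ne_zero (hv : ∀ k j, 0 ≤ v k j) (hα : 0 ≤ α i)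
    (hx : xalloc v ε α j i ≠ 0) : pbid v α i j ≤ α i * v i j + ε := by
  have hb : 0 ≤ bstar v α j := (mul_nonneg hα (hv i j)).trans (le_bstar i)
  linarith [pbid_le_bstar (i := i) hb, bstar_sub_le_of_xalloc_ne_zero hx]

variable [NeZero m]

lemma xalloc_mul_debt_le (hv : ∀ k j, 0 ≤ v k j) (hε : 0 ≤ ε)
    (hαi : α i = 1 + 2 * ε / vstar v i) (j : Fin m) :
    xalloc v ε α j i * (pbid v α i j - v i j) ≤ ε * (2 * vmax v / vstar v i + 1) := by
  have ht : 0 ≤ 2 * ε / vstar v i := div_nonneg (by positivity) (vstar_nonneg v i)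
  have hw : 0 ≤ 2 * vmax v / vstar v i :=
    div_nonneg (by linarith [vmax_nonneg hv]) (vstar_nonneg v i)
  have hC : 0 ≤ ε * (2 * vmax v / vstar v i + 1) := mul_nonneg hε (by linarith)
  obtain ⟨hx0, hx1⟩ := xalloc_mem_Icc v ε α i j
  rcases eq_or_ne (xalloc v ε α j i) 0 with hx | hx
  · rw [hx, zero_mul]
    exact hC
  have hp := pbid_le_of_xalloc_ne_zero hv (by linarith) hx
  have hdebt : pbid v α i j - v i j ≤ ε * (2 * vmax v / vstar v i + 1) :=
    calc pbid v α i j - v i j ≤ 2 * ε / vstar v i * v i j + ε := by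
          rw [hαi] at hp
          linarith
      _ ≤ 2 * ε / vstar v i * vmax v + ε := by gcongr; exact le_vmax v i j
      _ = ε * (2 * vmax v / vstar v i + 1) := by ring
  calc xalloc v ε α j i * (pbid v α i j - v i j)
      ≤ xalloc v ε α j i * (ε * (2 * vmax v / vstar v i + 1)) :=
        mul_le_mul_of_nonneg_left hdebt hx0
    _ ≤ ε * (2 * vmax v / vstar v i + 1) := mul_le_of_le_one_left hC hx1

lemma sum_xalloc_mul_debt_le (hv : ∀ k j, 0 ≤ v k j) (hε : 0 ≤ ε)
    (hαi : α i = 1 + 2 * ε / vstar v i) :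
    ∑ j, xalloc v ε α j i * (pbid v α i j - v i j)
      ≤ (m : ℝ) * ε * (2 * vmax v / vstar v i + 1) := by
  calc ∑ j, xalloc v ε α j i * (pbid v α i j - v i j)
      ≤ ∑ _j : Fin m, ε * (2 * vmax v / vstar v i + 1) :=
        sum_le_sum fun j _ => xalloc_mul_debt_le hv hε hαi j
    _ = (m : ℝ) * ε * (2 * vmax v / vstar v i + 1) := by
        rw [sum_const, card_univ, Fintype.card_fin, nsmul_eq_mul, mul_assoc]

end SmoothedGame

lemma exists_forall_mul_add_mul_sq_lt_sqrt (K L : ℝ) :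
    ∃ ε₀ > (0 : ℝ), ∀ ε, 0 < ε → ε < ε₀ → K * ε + L * ε ^ 2 < √ε := by
  have hlim : Filter.Tendsto (fun ε => (K + L * ε) * √ε) (nhds 0) (nhds 0) := by
    simpa using (by fun_prop : Continuous fun ε => (K + L * ε) * √ε).tendsto 0
  obtain ⟨δ, hδ, hsmall⟩ := Metric.eventually_nhds_iff.1 (hlim.eventually (gt_mem_nhds one_pos))
  refine ⟨δ, hδ, fun ε hε hεδ => ?_⟩
  have h1 : (K + L * ε) * √ε < 1 := hsmall (by rwa [Real.dist_eq, sub_zero, abs_of_pos hε])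
  have hsq : √ε * √ε = ε := Real.mul_self_sqrt hε.le
  calc K * ε + L * ε ^ 2 = (K + L * ε) * √ε * √ε := by rw [mul_assoc, hsq]; ring
    _ < 1 * √ε := mul_lt_mul_of_pos_right h1 (Real.sqrt_pos.2 hε)
    _ = √ε := one_mul _

theorem stmt6_general {n m : ℕ} [NeZero n] [NeZero m] (v : Fin n → Fin m → ℝ) (A : ℝ)
    (hv : ∀ i j, 0 ≤ v i j)
    (i : Fin n) :
    (∀ ε : ℝ, 0 < ε →
      ∀ α : Fin n → ℝ, (∀ k, 1 + 2 * ε / vstar v k ≤ α k ∧ α k ≤ A) →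
        α i = 1 + 2 * ε / vstar v i →
        ∑ j, xalloc v ε α j i * (pbid v α i j - v i j)
          ≤ (m : ℝ) * ε * (2 * vmax v / vstar v i + 1)) ∧
    (∃ ε₀ > (0 : ℝ), ∀ ε : ℝ, 0 < ε → ε < ε₀ →
      ∀ α : Fin n → ℝ, (∀ k, 1 + 2 * ε / vstar v k ≤ α k ∧ α k ≤ A) →
        α i = 1 + 2 * ε / vstar v i →
        ∑ j, xalloc v ε α j i * (pbid v α i j - v i j)
          + α i * ε - Real.sqrt ε < 0) := by
  refine ⟨fun ε hε α _ hαi => sum_xalloc_mul_debt_le hv hε.le hαi, ?_⟩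
  obtain ⟨ε₀, hε₀, hsmall⟩ := exists_forall_mul_add_mul_sq_lt_sqrt
    ((m : ℝ) * (2 * vmax v / vstar v i + 1) + 1) (2 / vstar v i)
  refine ⟨ε₀, hε₀, fun ε hε hεε₀ α _ hαi => ?_⟩
  have hreal := sum_xalloc_mul_debt_le hv hε.le hαi
  have hart : α i * ε = ε + 2 / vstar v i * ε ^ 2 := by rw [hαi]; ring
  linarith [hsmall ε hε hεε₀]

/-- in the `(ε,H)`-smoothed game, a bidder bidding at its minimum multiplier
`1 + 2ε/v_i*` incurs real debt `∑_j x_{i,j}(p_{i,j} − v_{i,j})` at most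
`m·ε·(2·max_{k,j} v_{k,j}/v_i* + 1)`; consequently for sufficiently small `ε` its total debt
(real debt plus artificial debt `α_i ε − ε^{1/2}`) is negative at the minimum multiplier. -/
theorem stmt6 {n m : ℕ} [NeZero n] [NeZero m] (v : Fin n → Fin m → ℝ) (A : ℝ)
    (hv : ∀ i j, 0 ≤ v i j)
    (hvstar_pos : ∀ k, 0 < vstar v k)
    (hvstar_le : ∀ k j, 0 < v k j → vstar v k ≤ v k j)
    (hvmax : ∀ k j, v k j ≤ vmax v)
    (i : Fin n) :
    (∀ ε : ℝ, 0 < ε →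
      ∀ α : Fin n → ℝ, (∀ k, 1 + 2 * ε / vstar v k ≤ α k ∧ α k ≤ A) →
        α i = 1 + 2 * ε / vstar v i →
        ∑ j, xalloc v ε α j i * (pbid v α i j - v i j)
          ≤ (m : ℝ) * ε * (2 * vmax v / vstar v i + 1)) ∧
    (∃ ε₀ > (0 : ℝ), ∀ ε : ℝ, 0 < ε → ε < ε₀ →
      ∀ α : Fin n → ℝ, (∀ k, 1 + 2 * ε / vstar v k ≤ α k ∧ α k ≤ A) →
        α i = 1 + 2 * ε / vstar v i →
        ∑ j, xalloc v ε α j i * (pbid v α i j - v i j)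
          + α i * ε - Real.sqrt ε < 0) :=
  stmt6_general v A hv i
end

section
/- MAX-REVENUE-PACING is NP-hard: there is a polynomial-time reduction from 3SAT such that a 3SAT instance with n variables and m clauses is satisfiable if and only if the constructed auto-bidding market (with 2n + 3m bidders and 2n + 2m goods as in the construction) admits an auto-bidding equilibrium with revenue at least 0.075 + m. -/
/-- Auto-bidding equilibrium over arbitrary finite sets of bidders and goods. -/
structure ABEquilibrium {ι γ : Type} [Fintype ι] [Fintype γ] (A : ℝ) (v : ι → γ → ℝ)
    (α : ι → ℝ) (x : ι → γ → ℝ) (p : γ → ℝ) : Prop where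
  mult_lb : ∀ i, 1 ≤ α i
  mult_ub : ∀ i, α i ≤ A
  alloc_nonneg : ∀ i j, 0 ≤ x i j
  alloc_le_one : ∀ i j, x i j ≤ 1
  highest : ∀ i j, 0 < x i j → ∀ k, α k * v k j ≤ α i * v i j
  second_price : ∀ i j, 0 < x i j →
    p j = sSup (insert 0 {b | ∃ k, k ≠ i ∧ b = α k * v k j})
  full_alloc : ∀ j, ∑ i, x i j = 1
  roi : ∀ i, ∑ j, x i j * p j ≤ ∑ j, x i j * v i j
  maximal : ∀ i, α i ≠ A → ∑ j, x i j * p j = ∑ j, x i j * v i j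

/-- Bidders of the 3SAT reduction: two bidders `1^{x_j}, 2^{x_j}` per variable (indexed by the
variable and the sign of the literal) and three bidders `3^c, 4^c, 5^c` per clause. -/
abbrev RedBidder (nv mc : ℕ) := (Fin nv × Bool) ⊕ (Fin mc × Fin 3)

/-- Goods of the 3SAT reduction: two goods per variable and two goods `3^c, 4^c` per clause. -/
abbrev RedGood (nv mc : ℕ) := (Fin nv × Bool) ⊕ (Fin mc × Fin 2)

/-- Valuations of the 3SAT reduction: variable bidders value their own variable good at
`0.05/n` and the opposite one at `0.025/n`, and value clause good `3^c` at `0.1` if their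
literal occurs in clause `c`; clause bidder `3^c` values good `3^c` at `0.5` and good `4^c`
at `0.1`; clause bidders `4^c, 5^c` value good `4^c` at `0.5`; all other values are `0`. -/
noncomputable def redval (nv mc : ℕ) (C : Fin mc → Fin 3 → Fin nv × Bool) :
    RedBidder nv mc → RedGood nv mc → ℝ
  | Sum.inl (j, b), Sum.inl (j', b') =>
      if j = j' then (if b = b' then 0.05 / nv else 0.025 / nv) else 0
  | Sum.inl (j, b), Sum.inr (c, g) =>
      if g = 0 ∧ ∃ t, C c t = (j, b) then 0.1 else 0
  | Sum.inr _, Sum.inl _ => 0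
  | Sum.inr (c, t), Sum.inr (c', g) =>
      if c = c' then
        if t = 0 then (if g = 0 then 0.5 else 0.1)
        else (if g = 1 then 0.5 else 0)
      else 0


set_option maxHeartbeats 1000000

/- helpers -/
lemma sSup_insert_zero_le {S : Set ℝ} {B : ℝ} (hB : 0 ≤ B) (h : ∀ b ∈ S, b ≤ B) :
    sSup (insert 0 S) ≤ B := by
  apply Real.sSup_le _ hB
  rintro x (rfl | hx)
  · exact hB
  · exact h x hx

lemma bids_bddAbove {ι : Type} [Fintype ι] (f : ι → ℝ) (i : ι) :
    BddAbove (insert (0:ℝ) {b | ∃ k, k ≠ i ∧ b = f k}) := by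
  apply Set.Finite.bddAbove
  apply Set.Finite.insert
  apply Set.Finite.subset (Set.finite_range f)
  rintro b ⟨k, -, rfl⟩
  exact ⟨k, rfl⟩

lemma le_sSup_insert_zero {ι : Type} [Fintype ι] {f : ι → ℝ} {i k : ι} (hk : k ≠ i) :
    f k ≤ sSup (insert (0:ℝ) {b | ∃ k, k ≠ i ∧ b = f k}) :=
  le_csSup (bids_bddAbove f i) (Set.mem_insert_of_mem _ ⟨k, hk, rfl⟩)

lemma sSup_insert_zero_nonneg {ι : Type} [Fintype ι] (f : ι → ℝ) (i : ι) :
    0 ≤ sSup (insert (0:ℝ) {b | ∃ k, k ≠ i ∧ b = f k}) :=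
  le_csSup (bids_bddAbove f i) (Set.mem_insert _ _)

lemma sSup_insert_zero_eq {ι : Type} [Fintype ι] {f : ι → ℝ} {i k : ι} {B : ℝ}
    (hk : k ≠ i) (hfk : f k = B) (hB : 0 ≤ B) (h : ∀ k', k' ≠ i → f k' ≤ B) :
    sSup (insert (0:ℝ) {b | ∃ k, k ≠ i ∧ b = f k}) = B := by
  apply le_antisymm
  · exact sSup_insert_zero_le hB (by rintro b ⟨k', hk', rfl⟩; exact h k' hk')
  · rw [← hfk]; exact le_sSup_insert_zero hk


noncomputable def fwdp (nv mc : ℕ) (σ : Fin nv → Bool) : RedGood nv mc → ℝ := fun g =>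
  match g with
  | Sum.inl (j, b) => if b = σ j then 0.025/(nv:ℝ) else 0.05/(nv:ℝ)
  | Sum.inr _ => (0.5:ℝ)

def fwdx (nv mc : ℕ) (σ : Fin nv → Bool) : RedBidder nv mc → RedGood nv mc → ℝ := fun i g =>
  match i, g with
  | Sum.inl y, Sum.inl (j', _) => if y = (j', σ j') then (1:ℝ) else 0
  | Sum.inr y, Sum.inr (c, g) => if y = (c, Fin.castSucc g) then (1:ℝ) else 0
  | _, _ => 0

def fwdα (nv mc : ℕ) (σ : Fin nv → Bool) : RedBidder nv mc → ℝ := fun i =>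
  match i with
  | Sum.inl (j, b) => if b = σ j then (5:ℝ) else 1
  | Sum.inr _ => 1

lemma fwd_spend_val (nv mc : ℕ) (σ : Fin nv → Bool) (C : Fin mc → Fin 3 → Fin nv × Bool)
    (i : RedBidder nv mc) :
    ∑ j, fwdx nv mc σ i j * fwdp nv mc σ j = ∑ j, fwdx nv mc σ i j * redval nv mc C i j := by
  classical
  rcases i with ⟨j0,b0⟩|⟨c0,t0⟩
  · by_cases hb : b0 = σ j0
    · subst hb
      have hx : ∀ z : RedGood nv mc, fwdx nv mc σ (Sum.inl (j0, σ j0)) z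
          = if z ∈ ({Sum.inl (j0,true), Sum.inl (j0,false)} : Finset (RedGood nv mc))
            then 1 else 0 := by
        rintro (⟨j',b'⟩|⟨c',g'⟩)
        · by_cases h : j' = j0 <;> cases b' <;> simp [fwdx, Prod.ext_iff, h]
          · intro he; exact absurd he.symm h
          · intro he; exact absurd he.symm h
        · simp [fwdx]
      have hgen : ∀ f : RedGood nv mc → ℝ,
          ∑ z : RedGood nv mc, fwdx nv mc σ (Sum.inl (j0, σ j0)) z * f z
            = f (Sum.inl (j0,true)) + f (Sum.inl (j0,false)) := by
        intro f
        rw [Finset.sum_congr rfl (fun z _ => by rw [hx z, ite_mul, one_mul, zero_mul])]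
        rw [Finset.sum_ite_mem, Finset.univ_inter, Finset.sum_pair (by simp)]
      rw [hgen, hgen]
      rcases hs : σ j0 with _|_ <;> simp [fwdp, redval, hs] <;> ring
    · have hx : ∀ z : RedGood nv mc, fwdx nv mc σ (Sum.inl (j0, b0)) z = 0 := by
        rintro (⟨j',b'⟩|⟨c',g'⟩)
        · simp only [fwdx]
          rw [if_neg]
          intro he; injection he with h1 h2; subst h1; exact hb h2
        · simp [fwdx]
      simp [hx]
  · have hsing : ∀ (a : RedGood nv mc), (∀ z : RedGood nv mc,
        fwdx nv mc σ (Sum.inr (c0,t0)) z = if z = a then 1 else 0) →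
        ∀ f : RedGood nv mc → ℝ,
          ∑ z : RedGood nv mc, fwdx nv mc σ (Sum.inr (c0,t0)) z * f z = f a := by
      intro a ha f
      rw [Finset.sum_congr rfl (fun z _ => by rw [ha z, ite_mul, one_mul, zero_mul])]
      exact (Finset.sum_ite_eq' Finset.univ a f).trans (by simp)
    fin_cases t0
    · rw [hsing (Sum.inr (c0, 0)) ?_, hsing (Sum.inr (c0, 0)) ?_]
      · simp [fwdp, redval]
      all_goals
        rintro (⟨j',b'⟩|⟨c',g'⟩)
        · simp [fwdx]
        · fin_cases g' <;> by_cases h : c' = c0 <;>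
            simp [fwdx, h, Prod.ext_iff, Fin.ext_iff] <;>
            (simp [Fin.ext_iff] at h; omega)
    · rw [hsing (Sum.inr (c0, 1)) ?_, hsing (Sum.inr (c0, 1)) ?_]
      · simp [fwdp, redval]
      all_goals
        rintro (⟨j',b'⟩|⟨c',g'⟩)
        · simp [fwdx]
        · fin_cases g' <;> by_cases h : c' = c0 <;>
            simp [fwdx, h, Prod.ext_iff, Fin.ext_iff] <;>
            (simp [Fin.ext_iff] at h; omega)
    · have hx : ∀ z : RedGood nv mc, fwdx nv mc σ (Sum.inr (c0, 2)) z = 0 := by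
        rintro (⟨j',b'⟩|⟨c',g'⟩)
        · simp [fwdx]
        · fin_cases g' <;> by_cases h : c' = c0 <;>
            simp [fwdx, h, Prod.ext_iff, Fin.ext_iff] <;>
            (simp [Fin.ext_iff] at h; omega)
      simp [hx]

lemma fwd_revenue (nv mc : ℕ) (hnv : 0 < nv) (σ : Fin nv → Bool) :
    ∑ j : RedGood nv mc, fwdp nv mc σ j = 0.075 + mc := by
  have hN : (0:ℝ) < (nv:ℝ) := by exact_mod_cast hnv
  rw [Fintype.sum_sum_type]
  have h1 : ∑ z : Fin nv × Bool, fwdp nv mc σ (Sum.inl z) = 0.075 := by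
    rw [Fintype.sum_prod_type]
    have hrow : ∀ j : Fin nv, (∑ b : Bool, fwdp nv mc σ (Sum.inl (j, b))) = 0.075/(nv:ℝ) := by
      intro j; rcases hs : σ j with _|_ <;> simp [fwdp, hs] <;> ring
    rw [Finset.sum_congr rfl (fun j _ => hrow j), Finset.sum_const, Finset.card_univ,
      Fintype.card_fin, nsmul_eq_mul]
    field_simp
  have h2 : ∑ z : Fin mc × Fin 2, fwdp nv mc σ (Sum.inr z) = mc := by
    rw [Finset.sum_congr rfl (fun z _ => show fwdp nv mc σ (Sum.inr z) = 0.5 from rfl),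
      Finset.sum_const, Finset.card_univ, nsmul_eq_mul]
    simp
    ring
  rw [h1, h2]

/- the forward direction -/
lemma forward (nv mc : ℕ) (hnv : 0 < nv) (C : Fin mc → Fin 3 → Fin nv × Bool)
    (A : ℝ) (hA : 5 < A) (σ : Fin nv → Bool) (hσ : ∀ c, ∃ t, (C c t).2 = σ (C c t).1) :
    (∃ (α : RedBidder nv mc → ℝ) (x : RedBidder nv mc → RedGood nv mc → ℝ)
        (p : RedGood nv mc → ℝ),
      ABEquilibrium A (redval nv mc C) α x p ∧ 0.075 + (mc : ℝ) ≤ ∑ j, p j) := by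
  have hN : (0:ℝ) < (nv:ℝ) := by exact_mod_cast hnv
  classical
  refine ⟨fwdα nv mc σ, fwdx nv mc σ, fwdp nv mc σ, ?_, ?_⟩
  · constructor
    · rintro (⟨j,b⟩|⟨c,t⟩) <;> simp [fwdα] <;> (try split) <;> norm_num
    · rintro (⟨j,b⟩|⟨c,t⟩) <;> simp [fwdα] <;> (try split) <;> linarith
    · rintro (⟨j,b⟩|⟨c,t⟩) (⟨j',b'⟩|⟨c',g'⟩) <;> simp [fwdx] <;> (try split) <;> norm_num
    · rintro (⟨j,b⟩|⟨c,t⟩) (⟨j',b'⟩|⟨c',g'⟩) <;> simp [fwdx] <;> (try split) <;> norm_num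
    · -- highest
      have hν : (0:ℝ) ≤ (nv:ℝ)⁻¹ := by positivity
      rintro (⟨j0,b0⟩|⟨c0,t0⟩) (⟨j1,b1⟩|⟨c1,g1⟩) hx k <;>
        [skip; (simp [fwdx] at hx); (simp [fwdx] at hx); skip]
      · -- variable bidder wins variable good
        have he : (j0,b0) = (j1, σ j1) := by
          by_contra h; simp [fwdx, h] at hx
        injection he with h1 h2; subst h1; subst h2
        rcases k with ⟨j2,b2⟩|⟨c2,t2⟩ <;>
          simp only [redval, fwdα] <;> split_ifs <;> simp_all <;>
          (try subst_vars) <;> (try simp only [div_eq_mul_inv]) <;>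
          (have hv : (0:ℝ) ≤ (nv:ℝ)⁻¹ := by positivity) <;> nlinarith [hv]
      · -- clause bidder wins clause good
        have he : (c0,t0) = (c1, Fin.castSucc g1) := by
          by_contra h; simp [fwdx, h] at hx
        injection he with h1 h2; subst h1; subst h2
        fin_cases g1 <;> rcases k with ⟨j2,b2⟩|⟨c2,t2⟩ <;>
          simp only [redval, fwdα] <;> split_ifs <;> simp_all <;>
          (try subst_vars) <;> (try simp only [div_eq_mul_inv]) <;>
          (have hv : (0:ℝ) ≤ (nv:ℝ)⁻¹ := by positivity) <;> nlinarith [hv]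
    · -- second_price
      rintro (⟨j0,b0⟩|⟨c0,t0⟩) (⟨j1,b1⟩|⟨c1,g1⟩) hx <;>
        [skip; (simp [fwdx] at hx); (simp [fwdx] at hx); skip]
      · have he : (j0,b0) = (j1, σ j1) := by by_contra h; simp [fwdx, h] at hx
        injection he with h1 h2; subst h1; subst h2
        by_cases hb : b1 = σ j0
        · refine Eq.trans (by simp [fwdp, hb]) (sSup_insert_zero_eq
            (k := Sum.inl (j0, !σ j0)) (B := 0.025/(nv:ℝ)) ?_ ?_ (by positivity) ?_).symm
          · simp
          · simp [redval, fwdα, hb]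
          · rintro (⟨j2,b2⟩|⟨c2,t2⟩) hk <;> simp [redval, fwdα] <;> (try split_ifs) <;>
              simp_all <;> positivity
        · refine Eq.trans (by simp [fwdp, hb]) (sSup_insert_zero_eq
            (k := Sum.inl (j0, b1)) (B := 0.05/(nv:ℝ)) ?_ ?_ (by positivity) ?_).symm
          · simp [hb]
          · simp [redval, fwdα, hb]
          · rintro (⟨j2,b2⟩|⟨c2,t2⟩) hk <;> simp [redval, fwdα] <;> (try split_ifs) <;>
              simp_all <;> (try positivity) <;>
              (have hv : (0:ℝ) ≤ (nv:ℝ)⁻¹ := by positivity) <;>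
              simp only [div_eq_mul_inv] <;> nlinarith [hv]
      · have he : (c0,t0) = (c1, Fin.castSucc g1) := by by_contra h; simp [fwdx, h] at hx
        injection he with h1 h2; subst h1; subst h2
        fin_cases g1
        · obtain ⟨t0, ht⟩ := hσ c0
          rcases hCt : C c0 t0 with ⟨jj, bb⟩
          rw [hCt] at ht; simp at ht
          refine Eq.trans (by simp [fwdp]) (sSup_insert_zero_eq
            (k := Sum.inl (jj, bb)) (B := (0.5:ℝ)) ?_ ?_ (by norm_num) ?_).symm
          · simp
          · have hex : ∃ t, C c0 t = (jj, σ jj) := ⟨t0, by rw [hCt, ht]⟩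
            simp [redval, fwdα, ht, hex]
            norm_num
          · rintro (⟨j2,b2⟩|⟨c2,t2⟩) hk <;> simp [redval, fwdα] <;> (try split_ifs) <;>
              simp_all <;> norm_num
        · refine Eq.trans (by simp [fwdp]) (sSup_insert_zero_eq
            (k := Sum.inr (c0, 2)) (B := (0.5:ℝ)) ?_ ?_ (by norm_num) ?_).symm
          · simp
          · simp [redval, fwdα]
          · rintro (⟨j2,b2⟩|⟨c2,t2⟩) hk <;> simp [redval, fwdα] <;> (try split_ifs) <;>
              simp_all <;> norm_num
    · -- full_alloc
      rintro (⟨j1,b1⟩|⟨c1,g1⟩) <;>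
        rw [Fintype.sum_sum_type] <;> simp [fwdx, Finset.sum_ite_eq']
    · -- roi
      intro i; exact le_of_eq (fwd_spend_val nv mc σ C i)
    · -- maximal
      intro i _; exact fwd_spend_val nv mc σ C i
  · rw [fwd_revenue nv mc hnv σ]


section Backward
variable {nv mc : ℕ} {C : Fin mc → Fin 3 → Fin nv × Bool} {A : ℝ}
  {α : RedBidder nv mc → ℝ} {x : RedBidder nv mc → RedGood nv mc → ℝ} {p : RedGood nv mc → ℝ}

lemma bk_val_nonneg (i : RedBidder nv mc) (j : RedGood nv mc) : 0 ≤ redval nv mc C i j := by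
  rcases i with ⟨j0,b0⟩|⟨c0,t0⟩ <;> rcases j with ⟨j1,b1⟩|⟨c1,g1⟩ <;>
    simp only [redval] <;> (try split_ifs) <;> positivity

lemma bk_winner (E : ABEquilibrium A (redval nv mc C) α x p) (j : RedGood nv mc) :
    ∃ i, 0 < x i j := by
  by_contra h
  push_neg at h
  have : (∑ i, x i j) ≤ 0 := Finset.sum_nonpos (fun i _ => h i)
  rw [E.full_alloc j] at this
  linarith

lemma bk_p_nonneg (E : ABEquilibrium A (redval nv mc C) α x p) (j : RedGood nv mc) :
    0 ≤ p j := by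
  obtain ⟨i, hi⟩ := bk_winner E j
  rw [E.second_price i j hi]
  exact le_csSup (bids_bddAbove _ i) (Set.mem_insert _ _)

lemma bk_p_ge (E : ABEquilibrium A (redval nv mc C) α x p) {i : RedBidder nv mc}
    {j : RedGood nv mc} (hi : 0 < x i j) {k : RedBidder nv mc} (hk : k ≠ i) :
    α k * redval nv mc C k j ≤ p j := by
  rw [E.second_price i j hi]
  exact le_csSup (bids_bddAbove (fun k => α k * redval nv mc C k j) i)
    (Set.mem_insert_of_mem _ ⟨k, hk, rfl⟩)

lemma bk_p_le (E : ABEquilibrium A (redval nv mc C) α x p) {i : RedBidder nv mc}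
    {j : RedGood nv mc} (hi : 0 < x i j) {B : ℝ} (hB : 0 ≤ B)
    (h : ∀ k, k ≠ i → α k * redval nv mc C k j ≤ B) : p j ≤ B := by
  rw [E.second_price i j hi]
  apply Real.sSup_le _ hB
  rintro b (rfl | ⟨k, hk, rfl⟩)
  · exact hB
  · exact h k hk

lemma bk_hnN (hnv : 0 < nv) : (0:ℝ) < (nv:ℝ) := by exact_mod_cast hnv

lemma bk_win_pos (hnv : 0 < nv) (E : ABEquilibrium A (redval nv mc C) α x p)
    {i : RedBidder nv mc} {j : RedGood nv mc} (hi : 0 < x i j) :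
    0 < redval nv mc C i j := by
  have hN := bk_hnN (nv := nv) hnv
  have hwit : ∃ k, 0 < redval nv mc C k j := by
    rcases j with ⟨j1,b1⟩|⟨c1,g1⟩
    · exact ⟨Sum.inl (j1,b1), by simp [redval]; positivity⟩
    · refine ⟨Sum.inr (c1, Fin.castSucc g1), ?_⟩
      fin_cases g1 <;> norm_num [redval]
  obtain ⟨k, hk⟩ := hwit
  have h1 := E.highest i j hi k
  have h2 : 1 * redval nv mc C k j ≤ α k * redval nv mc C k j :=
    mul_le_mul_of_nonneg_right (E.mult_lb k) (le_of_lt hk)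
  have h3 : 0 < α i * redval nv mc C i j := by nlinarith
  have h4 : (0:ℝ) < α i := lt_of_lt_of_le one_pos (E.mult_lb i)
  by_contra hcon
  push_neg at hcon
  nlinarith

lemma bk_winl (hnv : 0 < nv) (E : ABEquilibrium A (redval nv mc C) α x p)
    {i : RedBidder nv mc} {z : Fin nv × Bool} (hi : 0 < x i (Sum.inl z)) :
    ∃ b, i = Sum.inl (z.1, b) := by
  have hv := bk_win_pos hnv E hi
  rcases i with ⟨j0,b0⟩|⟨c0,t0⟩
  · rcases z with ⟨j1,b1⟩
    refine ⟨b0, ?_⟩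
    simp only [redval] at hv
    by_cases h : j0 = j1
    · simp [h]
    · rw [if_neg h] at hv; exact absurd hv (lt_irrefl (0:ℝ))
  · simp [redval] at hv

lemma bk_winr0 (hnv : 0 < nv) (E : ABEquilibrium A (redval nv mc C) α x p)
    {i : RedBidder nv mc} {c : Fin mc} (hi : 0 < x i (Sum.inr (c, 0))) :
    i = Sum.inr (c, 0) ∨ ∃ z : Fin nv × Bool, i = Sum.inl z ∧ ∃ t, C c t = z := by
  have hv := bk_win_pos hnv E hi
  rcases i with ⟨j0,b0⟩|⟨c0,t0⟩
  · right
    refine ⟨(j0,b0), rfl, ?_⟩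
    simp only [redval] at hv
    split_ifs at hv with h
    · exact h.2
    · exact absurd hv (lt_irrefl (0:ℝ))
  · left
    simp only [redval] at hv
    split_ifs at hv with h1 h2 h3 <;> simp_all

lemma bk_winr1 (hnv : 0 < nv) (E : ABEquilibrium A (redval nv mc C) α x p)
    {i : RedBidder nv mc} {c : Fin mc} (hi : 0 < x i (Sum.inr (c, 1))) :
    ∃ t, i = Sum.inr (c, t) := by
  have hv := bk_win_pos hnv E hi
  rcases i with ⟨j0,b0⟩|⟨c0,t0⟩
  · simp only [redval] at hv
    split_ifs at hv with h
    · exact absurd h.1 (by norm_num)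
    · exact absurd hv (lt_irrefl (0:ℝ))
  · refine ⟨t0, ?_⟩
    simp only [redval] at hv
    split_ifs at hv with h1 <;> simp_all

lemma bk_p4_ge (hnv : 0 < nv) (E : ABEquilibrium A (redval nv mc C) α x p) (c : Fin mc) :
    0.5 ≤ p (Sum.inr (c, 1)) := by
  obtain ⟨i, hi⟩ := bk_winner E (Sum.inr (c, 1))
  obtain ⟨t, rfl⟩ := bk_winr1 hnv E hi
  have hk : ∃ t' : Fin 3, t' ≠ 0 ∧ t' ≠ t := by
    fin_cases t
    · exact ⟨1, by decide, by decide⟩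
    · exact ⟨2, by decide, by decide⟩
    · exact ⟨1, by decide, by decide⟩
  obtain ⟨t', ht'0, ht't⟩ := hk
  have := bk_p_ge E hi (k := Sum.inr (c, t')) (by simp [ht't])
  have hval : redval nv mc C (Sum.inr (c, t')) (Sum.inr (c, 1)) = 0.5 := by
    simp [redval, ht'0]
  rw [hval] at this
  nlinarith [E.mult_lb (Sum.inr (c, t') : RedBidder nv mc)]

lemma bk_pg3_lit_ge (E : ABEquilibrium A (redval nv mc C) α x p)
    {z : Fin nv × Bool} {c : Fin mc} (hi : 0 < x (Sum.inl z) (Sum.inr (c, 0))) :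
    0.5 ≤ p (Sum.inr (c, 0)) := by
  have := bk_p_ge E hi (k := Sum.inr (c, 0)) (by simp)
  have hval : redval nv mc C (Sum.inr (c, 0)) (Sum.inr (c, 0)) = 0.5 := by
    simp [redval]
  rw [hval] at this
  nlinarith [E.mult_lb (Sum.inr (c, 0) : RedBidder nv mc)]

lemma bk_rowzero (hnv : 0 < nv) (E : ABEquilibrium A (redval nv mc C) α x p)
    (z : Fin nv × Bool) {a : Fin nv × Bool} (ha : a.1 ≠ z.1) :
    x (Sum.inl z) (Sum.inl a) = 0 := by
  by_contra h
  have hx : 0 < x (Sum.inl z) (Sum.inl a) := lt_of_le_of_ne (E.alloc_nonneg _ _) (Ne.symm h)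
  obtain ⟨b, hb⟩ := bk_winl hnv E hx
  injection hb with hb'
  exact ha (congrArg Prod.fst hb').symm

lemma bk_varrow (hnv : 0 < nv) (E : ABEquilibrium A (redval nv mc C) α x p)
    (z : Fin nv × Bool) (q : RedGood nv mc → ℝ) :
    ∑ a : Fin nv × Bool, x (Sum.inl z) (Sum.inl a) * q (Sum.inl a)
      = x (Sum.inl z) (Sum.inl (z.1,true)) * q (Sum.inl (z.1,true))
        + x (Sum.inl z) (Sum.inl (z.1,false)) * q (Sum.inl (z.1,false)) := by
  classical
  have h1 : ∀ a ∈ Finset.univ, a ∉ ({(z.1,true),(z.1,false)} : Finset (Fin nv × Bool)) →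
      x (Sum.inl z) (Sum.inl a) * q (Sum.inl a) = 0 := by
    intro a _ ha
    have hne : a.1 ≠ z.1 := by
      intro h; apply ha; rcases a with ⟨a1,ab⟩; cases ab <;> simp_all
    rw [bk_rowzero hnv E z hne, zero_mul]
  rw [← Finset.sum_subset (Finset.subset_univ _) h1, Finset.sum_pair (by simp)]

lemma bk_varclause (hnv : 0 < nv) (E : ABEquilibrium A (redval nv mc C) α x p)
    (z : Fin nv × Bool) :
    ∑ g : Fin mc × Fin 2, x (Sum.inl z) (Sum.inr g) * redval nv mc C (Sum.inl z) (Sum.inr g)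
      ≤ ∑ g : Fin mc × Fin 2, x (Sum.inl z) (Sum.inr g) * p (Sum.inr g) := by
  apply Finset.sum_le_sum
  intro g _
  rcases eq_or_lt_of_le (E.alloc_nonneg (Sum.inl z) (Sum.inr g)) with he|hx
  · rw [← he]; simp
  · apply mul_le_mul_of_nonneg_left _ (le_of_lt hx)
    rcases g with ⟨c,gg⟩
    have hv := bk_win_pos hnv E hx
    rcases z with ⟨j0,b0⟩
    simp only [redval] at hv ⊢
    split_ifs at hv ⊢ with h
    · obtain ⟨h0, -⟩ := h
      subst h0
      have := bk_pg3_lit_ge E hx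
      linarith
    · exact absurd hv (lt_irrefl (0:ℝ))

lemma bk_varroi (hnv : 0 < nv) (E : ABEquilibrium A (redval nv mc C) α x p)
    (z : Fin nv × Bool) :
    x (Sum.inl z) (Sum.inl (z.1,true)) * p (Sum.inl (z.1,true))
      + x (Sum.inl z) (Sum.inl (z.1,false)) * p (Sum.inl (z.1,false))
    ≤ x (Sum.inl z) (Sum.inl (z.1,true)) * redval nv mc C (Sum.inl z) (Sum.inl (z.1,true))
      + x (Sum.inl z) (Sum.inl (z.1,false)) * redval nv mc C (Sum.inl z) (Sum.inl (z.1,false)) := by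
  have hro := E.roi (Sum.inl z)
  rw [Fintype.sum_sum_type, Fintype.sum_sum_type] at hro
  rw [bk_varrow hnv E z p, bk_varrow hnv E z (redval nv mc C (Sum.inl z))] at hro
  have := bk_varclause hnv E z
  linarith

lemma bk_varroi' (hnv : 0 < nv) (E : ABEquilibrium A (redval nv mc C) α x p)
    (j : Fin nv) (b : Bool) :
    x (Sum.inl (j,b)) (Sum.inl (j,true)) * p (Sum.inl (j,true))
      + x (Sum.inl (j,b)) (Sum.inl (j,false)) * p (Sum.inl (j,false))
    ≤ x (Sum.inl (j,b)) (Sum.inl (j,true)) * redval nv mc C (Sum.inl (j,b)) (Sum.inl (j,true))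
      + x (Sum.inl (j,b)) (Sum.inl (j,false)) * redval nv mc C (Sum.inl (j,b)) (Sum.inl (j,false)) := by
  simpa using bk_varroi hnv E (j,b)

lemma bk_fullvar (hnv : 0 < nv) (E : ABEquilibrium A (redval nv mc C) α x p)
    (j : Fin nv) (b : Bool) :
    x (Sum.inl (j,true)) (Sum.inl (j,b)) + x (Sum.inl (j,false)) (Sum.inl (j,b)) = 1 := by
  classical
  have hfa := E.full_alloc (Sum.inl (j,b))
  rw [Fintype.sum_sum_type] at hfa
  have hz : ∀ ct : Fin mc × Fin 3, x (Sum.inr ct) (Sum.inl (j,b)) = 0 := by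
    intro ct; by_contra h
    have hx : 0 < x (Sum.inr ct) (Sum.inl (j,b)) :=
      lt_of_le_of_ne (E.alloc_nonneg _ _) (Ne.symm h)
    obtain ⟨b', hb⟩ := bk_winl hnv E hx
    simp at hb
  rw [Finset.sum_eq_zero (fun ct _ => hz ct)] at hfa
  have h1 : ∀ a ∈ Finset.univ, a ∉ ({(j,true),(j,false)} : Finset (Fin nv × Bool)) →
      x (Sum.inl a) (Sum.inl (j,b)) = 0 := by
    intro a _ ha
    refine bk_rowzero hnv E a ?_
    rcases a with ⟨a1,ab⟩
    intro h; apply ha; cases ab <;> simp_all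
  rw [← Finset.sum_subset (Finset.subset_univ _) h1, Finset.sum_pair (by simp)] at hfa
  linarith

lemma bk_pair (hnv : 0 < nv) (E : ABEquilibrium A (redval nv mc C) α x p) (j : Fin nv) :
    p (Sum.inl (j,true)) + p (Sum.inl (j,false)) ≤ 0.1/(nv:ℝ) := by
  have hN := bk_hnN (nv := nv) hnv
  have roiT := bk_varroi' hnv E j true
  have roiF := bk_varroi' hnv E j false
  have v1 : redval nv mc C (Sum.inl (j,true)) (Sum.inl (j,true)) = 0.05/(nv:ℝ) := by
    simp [redval]
  have v2 : redval nv mc C (Sum.inl (j,true)) (Sum.inl (j,false)) = 0.025/(nv:ℝ) := by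
    simp [redval]
  have v3 : redval nv mc C (Sum.inl (j,false)) (Sum.inl (j,true)) = 0.025/(nv:ℝ) := by
    simp [redval]
  have v4 : redval nv mc C (Sum.inl (j,false)) (Sum.inl (j,false)) = 0.05/(nv:ℝ) := by
    simp [redval]
  rw [v1, v2] at roiT
  rw [v3, v4] at roiF
  have s1 := bk_fullvar hnv E j true
  have s2 := bk_fullvar hnv E j false
  have e1 : x (Sum.inl (j,true)) (Sum.inl (j,true)) * p (Sum.inl (j,true))
      + x (Sum.inl (j,false)) (Sum.inl (j,true)) * p (Sum.inl (j,true)) = p (Sum.inl (j,true)) := by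
    rw [← add_mul, s1, one_mul]
  have e2 : x (Sum.inl (j,true)) (Sum.inl (j,false)) * p (Sum.inl (j,false))
      + x (Sum.inl (j,false)) (Sum.inl (j,false)) * p (Sum.inl (j,false)) = p (Sum.inl (j,false)) := by
    rw [← add_mul, s2, one_mul]
  have hwu : (0.025:ℝ)/(nv:ℝ) ≤ 0.05/(nv:ℝ) := by
    gcongr <;> norm_num
  have m1 : x (Sum.inl (j,true)) (Sum.inl (j,false)) * (0.025/(nv:ℝ))
      ≤ x (Sum.inl (j,true)) (Sum.inl (j,false)) * (0.05/(nv:ℝ)) :=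
    mul_le_mul_of_nonneg_left hwu (E.alloc_nonneg _ _)
  have m2 : x (Sum.inl (j,false)) (Sum.inl (j,true)) * (0.025/(nv:ℝ))
      ≤ x (Sum.inl (j,false)) (Sum.inl (j,true)) * (0.05/(nv:ℝ)) :=
    mul_le_mul_of_nonneg_left hwu (E.alloc_nonneg _ _)
  have e3 : x (Sum.inl (j,true)) (Sum.inl (j,true)) * (0.05/(nv:ℝ))
      + x (Sum.inl (j,false)) (Sum.inl (j,true)) * (0.05/(nv:ℝ)) = 0.05/(nv:ℝ) := by
    rw [← add_mul, s1, one_mul]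
  have e4 : x (Sum.inl (j,true)) (Sum.inl (j,false)) * (0.05/(nv:ℝ))
      + x (Sum.inl (j,false)) (Sum.inl (j,false)) * (0.05/(nv:ℝ)) = 0.05/(nv:ℝ) := by
    rw [← add_mul, s2, one_mul]
  have e5 : (0.05:ℝ)/(nv:ℝ) + 0.05/(nv:ℝ) = 0.1/(nv:ℝ) := by ring
  linarith

lemma bk_notboth (hnv : 0 < nv) (E : ABEquilibrium A (redval nv mc C) α x p) (j : Fin nv) :
    α (Sum.inl (j,true)) ≤ 2 ∨ α (Sum.inl (j,false)) ≤ 2 := by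
  have hN := bk_hnN (nv := nv) hnv
  have hw : (0:ℝ) < 0.025/(nv:ℝ) := div_pos (by norm_num) hN
  have euw : (0.05:ℝ)/(nv:ℝ) = 2*(0.025/(nv:ℝ)) := by ring
  by_contra hcon
  push_neg at hcon
  obtain ⟨ha, hb⟩ := hcon
  have v1 : redval nv mc C (Sum.inl (j,true)) (Sum.inl (j,true)) = 0.05/(nv:ℝ) := by
    simp [redval]
  have v2 : redval nv mc C (Sum.inl (j,true)) (Sum.inl (j,false)) = 0.025/(nv:ℝ) := by
    simp [redval]
  have v3 : redval nv mc C (Sum.inl (j,false)) (Sum.inl (j,true)) = 0.025/(nv:ℝ) := by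
    simp [redval]
  have v4 : redval nv mc C (Sum.inl (j,false)) (Sum.inl (j,false)) = 0.05/(nv:ℝ) := by
    simp [redval]
  have roiT := bk_varroi' hnv E j true
  have roiF := bk_varroi' hnv E j false
  rw [v1, v2] at roiT
  rw [v3, v4] at roiF
  -- step 1 : true bidder does not win its own good
  have step1 : x (Sum.inl (j,true)) (Sum.inl (j,true)) = 0 := by
    by_contra h0
    have hTT : 0 < x (Sum.inl (j,true)) (Sum.inl (j,true)) :=
      lt_of_le_of_ne (E.alloc_nonneg _ _) (Ne.symm h0)
    have hpT := bk_p_ge E hTT (k := Sum.inl (j,false)) (by simp)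
    rw [v3] at hpT
    have hb2 : (0.05:ℝ)/(nv:ℝ) < p (Sum.inl (j,true)) := by
      nlinarith [mul_pos (show (0:ℝ) < α (Sum.inl (j,false)) - 2 by linarith) hw]
    have hx1 : x (Sum.inl (j,true)) (Sum.inl (j,true)) * (0.05/(nv:ℝ))
        < x (Sum.inl (j,true)) (Sum.inl (j,true)) * p (Sum.inl (j,true)) :=
      mul_lt_mul_of_pos_left hb2 hTT
    have hx2 : x (Sum.inl (j,true)) (Sum.inl (j,false)) * (0.025/(nv:ℝ))
        ≤ x (Sum.inl (j,true)) (Sum.inl (j,false)) * p (Sum.inl (j,false)) := by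
      rcases eq_or_lt_of_le (E.alloc_nonneg (Sum.inl (j,true)) (Sum.inl (j,false))) with he|hl
      · rw [← he]; simp
      · have hpF := bk_p_ge E hl (k := Sum.inl (j,false)) (by simp)
        rw [v4] at hpF
        have hm := E.mult_lb (Sum.inl (j,false) : RedBidder nv mc)
        apply mul_le_mul_of_nonneg_left _ (le_of_lt hl)
        nlinarith
    linarith
  -- step 2 : false bidder does not win its own good
  have step2 : x (Sum.inl (j,false)) (Sum.inl (j,false)) = 0 := by
    by_contra h0
    have hFF : 0 < x (Sum.inl (j,false)) (Sum.inl (j,false)) :=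
      lt_of_le_of_ne (E.alloc_nonneg _ _) (Ne.symm h0)
    have hpF := bk_p_ge E hFF (k := Sum.inl (j,true)) (by simp)
    rw [v2] at hpF
    have ha2 : (0.05:ℝ)/(nv:ℝ) < p (Sum.inl (j,false)) := by
      nlinarith [mul_pos (show (0:ℝ) < α (Sum.inl (j,true)) - 2 by linarith) hw]
    have hx1 : x (Sum.inl (j,false)) (Sum.inl (j,false)) * (0.05/(nv:ℝ))
        < x (Sum.inl (j,false)) (Sum.inl (j,false)) * p (Sum.inl (j,false)) :=
      mul_lt_mul_of_pos_left ha2 hFF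
    have hx2 : x (Sum.inl (j,false)) (Sum.inl (j,true)) * (0.025/(nv:ℝ))
        ≤ x (Sum.inl (j,false)) (Sum.inl (j,true)) * p (Sum.inl (j,true)) := by
      rcases eq_or_lt_of_le (E.alloc_nonneg (Sum.inl (j,false)) (Sum.inl (j,true))) with he|hl
      · rw [← he]; simp
      · have hpT := bk_p_ge E hl (k := Sum.inl (j,true)) (by simp)
        rw [v1] at hpT
        have hm := E.mult_lb (Sum.inl (j,true) : RedBidder nv mc)
        apply mul_le_mul_of_nonneg_left _ (le_of_lt hl)
        nlinarith
    linarith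
  -- step 3 : cross allocation, contradiction
  have s1 := bk_fullvar hnv E j true
  have s2 := bk_fullvar hnv E j false
  rw [step1] at s1
  rw [step2] at s2
  have hxFT : 0 < x (Sum.inl (j,false)) (Sum.inl (j,true)) := by linarith
  have hpT := bk_p_ge E hxFT (k := Sum.inl (j,true)) (by simp)
  rw [v1] at hpT
  have hm := E.mult_lb (Sum.inl (j,true) : RedBidder nv mc)
  -- roiF : xFT * pT + xFF * pF ≤ xFT * w + xFF * u, with xFT = 1, xFF = 0
  have hxFT1 : x (Sum.inl (j,false)) (Sum.inl (j,true)) = 1 := by linarith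
  rw [hxFT1, step2] at roiF
  simp at roiF
  -- roiF : pT ≤ 0.025/nv ; but pT ≥ a * (0.05/nv) > 2 * 0.05/nv
  have hpp : 0 ≤ p (Sum.inl (j,false)) := bk_p_nonneg E _
  nlinarith [mul_pos (show (0:ℝ) < α (Sum.inl (j,true)) - 2 by linarith)
    (show (0:ℝ) < 0.05/(nv:ℝ) from div_pos (by norm_num) hN)]

lemma bk_varclause_pt (hnv : 0 < nv) (E : ABEquilibrium A (redval nv mc C) α x p)
    (z : Fin nv × Bool) (g : Fin mc × Fin 2) :
    0 ≤ x (Sum.inl z) (Sum.inr g) * (p (Sum.inr g) - redval nv mc C (Sum.inl z) (Sum.inr g)) := by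
  rcases eq_or_lt_of_le (E.alloc_nonneg (Sum.inl z) (Sum.inr g)) with he|hx
  · rw [← he]; simp
  · apply mul_nonneg (le_of_lt hx)
    rcases g with ⟨c,gg⟩
    have hv := bk_win_pos hnv E hx
    rcases z with ⟨j0,b0⟩
    simp only [redval] at hv ⊢
    split_ifs at hv ⊢ with h
    · obtain ⟨h0, -⟩ := h
      subst h0
      have := bk_pg3_lit_ge E hx
      linarith
    · exact absurd hv (lt_irrefl (0:ℝ))

lemma bk_litval (hnv : 0 < nv) (E : ABEquilibrium A (redval nv mc C) α x p)
    {z : Fin nv × Bool} {c : Fin mc} (hx : 0 < x (Sum.inl z) (Sum.inr (c, 0))) :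
    redval nv mc C (Sum.inl z) (Sum.inr (c, 0)) = 0.1 := by
  have hv := bk_win_pos hnv E hx
  rcases z with ⟨j0,b0⟩
  simp only [redval] at hv ⊢
  split_ifs at hv ⊢ with h
  · rfl
  · exact absurd hv (lt_irrefl (0:ℝ))

lemma bk_litwin (hnv : 0 < nv) (E : ABEquilibrium A (redval nv mc C) α x p)
    {z : Fin nv × Bool} {c : Fin mc} (hx : 0 < x (Sum.inl z) (Sum.inr (c, 0))) :
    x (Sum.inl z) (Sum.inr (c, 0)) * (0.4:ℝ) ≤ 0.075/(nv:ℝ) := by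
  have hN := bk_hnN (nv := nv) hnv
  have hro := E.roi (Sum.inl z)
  rw [Fintype.sum_sum_type, Fintype.sum_sum_type] at hro
  rw [bk_varrow hnv E z p, bk_varrow hnv E z (redval nv mc C (Sum.inl z))] at hro
  -- variable-good payment is nonnegative
  have hAp : 0 ≤ x (Sum.inl z) (Sum.inl (z.1,true)) * p (Sum.inl (z.1,true))
      + x (Sum.inl z) (Sum.inl (z.1,false)) * p (Sum.inl (z.1,false)) :=
    add_nonneg (mul_nonneg (E.alloc_nonneg _ _) (bk_p_nonneg E _))
      (mul_nonneg (E.alloc_nonneg _ _) (bk_p_nonneg E _))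
  -- variable-good value is at most u + w
  have hAv : x (Sum.inl z) (Sum.inl (z.1,true)) * redval nv mc C (Sum.inl z) (Sum.inl (z.1,true))
      + x (Sum.inl z) (Sum.inl (z.1,false)) * redval nv mc C (Sum.inl z) (Sum.inl (z.1,false))
      ≤ 0.075/(nv:ℝ) := by
    rcases z with ⟨j,b⟩
    have hx1 := E.alloc_nonneg (Sum.inl (j,b)) (Sum.inl (j,true))
    have hx2 := E.alloc_nonneg (Sum.inl (j,b)) (Sum.inl (j,false))
    have hy1 := E.alloc_le_one (Sum.inl (j,b)) (Sum.inl (j,true))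
    have hy2 := E.alloc_le_one (Sum.inl (j,b)) (Sum.inl (j,false))
    have hw : (0:ℝ) < 0.025/(nv:ℝ) := div_pos (by norm_num) hN
    have hu : (0:ℝ) < 0.05/(nv:ℝ) := div_pos (by norm_num) hN
    have e : (0.075:ℝ)/(nv:ℝ) = 0.05/(nv:ℝ) + 0.025/(nv:ℝ) := by ring
    cases b <;> simp only [redval, if_pos rfl] <;> norm_num <;> nlinarith
  -- single clause-good term bounded by the total clause surplus
  have hone := Finset.single_le_sum
    (f := fun g => x (Sum.inl z) (Sum.inr g) * (p (Sum.inr g) - redval nv mc C (Sum.inl z) (Sum.inr g)))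
    (fun g _ => bk_varclause_pt hnv E z g) (Finset.mem_univ ((c, 0) : Fin mc × Fin 2))
  have hsplit : ∑ g : Fin mc × Fin 2,
      x (Sum.inl z) (Sum.inr g) * (p (Sum.inr g) - redval nv mc C (Sum.inl z) (Sum.inr g))
      = (∑ g : Fin mc × Fin 2, x (Sum.inl z) (Sum.inr g) * p (Sum.inr g))
        - ∑ g : Fin mc × Fin 2, x (Sum.inl z) (Sum.inr g) * redval nv mc C (Sum.inl z) (Sum.inr g) := by
    rw [← Finset.sum_sub_distrib]
    apply Finset.sum_congr rfl
    intro g _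
    ring
  have hp3 := bk_pg3_lit_ge E hx
  have hval := bk_litval hnv E hx
  have hterm : x (Sum.inl z) (Sum.inr (c, 0)) * (0.4:ℝ)
      ≤ x (Sum.inl z) (Sum.inr (c, 0)) * (p (Sum.inr (c, 0)) - redval nv mc C (Sum.inl z) (Sum.inr (c, 0))) := by
    apply mul_le_mul_of_nonneg_left _ (E.alloc_nonneg _ _)
    rw [hval]
    linarith
  linarith [hone, hterm]

lemma bk_x33_pos (hnv : 0 < nv) (E : ABEquilibrium A (redval nv mc C) α x p) (c : Fin mc) :
    0 < x (Sum.inr (c, 0)) (Sum.inr (c, 0)) := by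
  classical
  have hN := bk_hnN (nv := nv) hnv
  by_contra h
  have h0 : x (Sum.inr (c, 0)) (Sum.inr (c, 0)) = 0 :=
    le_antisymm (not_lt.mp h) (E.alloc_nonneg _ _)
  have hfa := E.full_alloc (Sum.inr (c, 0))
  set S : Finset (RedBidder nv mc) :=
    {Sum.inl (C c 0), Sum.inl (C c 1), Sum.inl (C c 2)} with hS
  have hbound : ∀ i : RedBidder nv mc, x i (Sum.inr (c, 0))
      ≤ (if i ∈ S then (0.1875:ℝ)/(nv:ℝ) else 0) := by
    intro i
    rcases eq_or_lt_of_le (E.alloc_nonneg i (Sum.inr (c, 0))) with he|hx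
    · rw [← he]; split
      · positivity
      · exact le_refl 0
    · rcases bk_winr0 hnv E hx with rfl | ⟨z, rfl, t, hct⟩
      · rw [h0] at hx; exact absurd hx (lt_irrefl 0)
      · have hmem : Sum.inl z ∈ S := by
          rw [← hct, hS]
          fin_cases t <;> simp
        rw [if_pos hmem]
        have hlw := bk_litwin hnv E hx
        have e : (0.075:ℝ)/(nv:ℝ) = 0.4*(0.1875/(nv:ℝ)) := by ring
        linarith
  have hsum := Finset.sum_le_sum (fun i (_ : i ∈ Finset.univ) => hbound i)
  rw [hfa, Finset.sum_ite_mem, Finset.univ_inter, Finset.sum_const, nsmul_eq_mul] at hsum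
  have hcard : (S.card : ℝ) ≤ 3 := by
    have h1 : S.card ≤ 3 := by
      apply le_trans (Finset.card_insert_le _ _)
      have h2 := Finset.card_insert_le (Sum.inl (C c 1) : RedBidder nv mc)
        ({Sum.inl (C c 2)} : Finset (RedBidder nv mc))
      simp only [Finset.card_singleton] at h2
      omega
    exact_mod_cast h1
  have h1n : (1:ℝ) ≤ (nv:ℝ) := by exact_mod_cast hnv
  have hd : (0.1875:ℝ)/(nv:ℝ) ≤ 0.1875 := div_le_self (by norm_num) h1n
  have hd0 : (0:ℝ) ≤ (0.1875:ℝ)/(nv:ℝ) := by positivity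
  nlinarith

lemma bk_roi3 (hnv : 0 < nv) (E : ABEquilibrium A (redval nv mc C) α x p) (c : Fin mc) :
    x (Sum.inr (c,0)) (Sum.inr (c,0)) * p (Sum.inr (c,0))
      + x (Sum.inr (c,0)) (Sum.inr (c,1)) * p (Sum.inr (c,1))
    ≤ x (Sum.inr (c,0)) (Sum.inr (c,0)) * 0.5
      + x (Sum.inr (c,0)) (Sum.inr (c,1)) * 0.1 := by
  classical
  have hne : (Sum.inr (c,(0:Fin 2)) : RedGood nv mc) ≠ Sum.inr (c,1) := by simp
  have hL : x (Sum.inr (c,0)) (Sum.inr (c,0)) * p (Sum.inr (c,0))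
      + x (Sum.inr (c,0)) (Sum.inr (c,1)) * p (Sum.inr (c,1))
      ≤ ∑ j : RedGood nv mc, x (Sum.inr (c,0)) j * p j := by
    have hs := Finset.sum_le_sum_of_subset_of_nonneg
      (f := fun j => x (Sum.inr (c,0)) j * p j)
      (Finset.subset_univ ({Sum.inr (c,(0:Fin 2)), Sum.inr (c,1)} : Finset (RedGood nv mc)))
      (fun j _ _ => mul_nonneg (E.alloc_nonneg _ _) (bk_p_nonneg E j))
    rwa [Finset.sum_pair hne] at hs
  have hR : ∑ j : RedGood nv mc, x (Sum.inr (c,0)) j * redval nv mc C (Sum.inr (c,0)) j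
      = x (Sum.inr (c,0)) (Sum.inr (c,0)) * 0.5
        + x (Sum.inr (c,0)) (Sum.inr (c,1)) * 0.1 := by
    have hz : ∀ j ∈ Finset.univ, j ∉ ({Sum.inr (c,(0:Fin 2)), Sum.inr (c,1)} : Finset (RedGood nv mc)) →
        x (Sum.inr (c,0)) j * redval nv mc C (Sum.inr (c,0)) j = 0 := by
      rintro (⟨j1,b1⟩|⟨c1,g1⟩) - hj
      · simp [redval]
      · have hc : c ≠ c1 := by
          intro hcc; subst hcc; apply hj; fin_cases g1 <;> simp
        simp [redval, hc]
    rw [← Finset.sum_subset (Finset.subset_univ _) hz, Finset.sum_pair hne]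
    norm_num [redval]
  have := E.roi (Sum.inr (c,0))
  rw [hR] at this
  linarith

lemma bk_roi45 (hnv : 0 < nv) (E : ABEquilibrium A (redval nv mc C) α x p) (c : Fin mc)
    (t : Fin 3) (ht : t ≠ 0) :
    x (Sum.inr (c,t)) (Sum.inr (c,1)) * p (Sum.inr (c,1))
      ≤ x (Sum.inr (c,t)) (Sum.inr (c,1)) * 0.5 := by
  classical
  have hL : x (Sum.inr (c,t)) (Sum.inr (c,1)) * p (Sum.inr (c,1))
      ≤ ∑ j : RedGood nv mc, x (Sum.inr (c,t)) j * p j :=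
    Finset.single_le_sum (f := fun j => x (Sum.inr (c,t)) j * p j)
      (fun j _ => mul_nonneg (E.alloc_nonneg _ _) (bk_p_nonneg E j))
      (Finset.mem_univ (Sum.inr (c,1)))
  have hR : ∑ j : RedGood nv mc, x (Sum.inr (c,t)) j * redval nv mc C (Sum.inr (c,t)) j
      = x (Sum.inr (c,t)) (Sum.inr (c,1)) * 0.5 := by
    have hz : ∀ j ∈ Finset.univ, j ≠ (Sum.inr (c,(1:Fin 2)) : RedGood nv mc) →
        x (Sum.inr (c,t)) j * redval nv mc C (Sum.inr (c,t)) j = 0 := by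
      rintro (⟨j1,b1⟩|⟨c1,g1⟩) - hj
      · simp [redval]
      · by_cases hc : c = c1
        · subst hc
          have hg : g1 ≠ 1 := by intro hgg; subst hgg; exact hj rfl
          have hg0 : g1 = 0 := by omega
          subst hg0
          simp [redval, ht]
        · simp [redval, hc]
    rw [Finset.sum_eq_single_of_mem (Sum.inr (c,(1:Fin 2)) : RedGood nv mc)
      (Finset.mem_univ _) (fun j hj hne => hz j hj hne)]
    norm_num [redval, ht]
  have := E.roi (Sum.inr (c,t))
  rw [hR] at this
  linarith

lemma bk_p3_le (hnv : 0 < nv) (E : ABEquilibrium A (redval nv mc C) α x p) (c : Fin mc) :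
    p (Sum.inr (c, 0)) ≤ 0.5 := by
  have hx33 := bk_x33_pos hnv E c
  have hroi := bk_roi3 hnv E c
  have hp4 := bk_p4_ge hnv E c
  have hx34 := E.alloc_nonneg (Sum.inr (c,0) : RedBidder nv mc) (Sum.inr (c,1))
  have m1 : x (Sum.inr (c,0)) (Sum.inr (c,1)) * 0.5 ≤ x (Sum.inr (c,0)) (Sum.inr (c,1)) * p (Sum.inr (c,1)) :=
    mul_le_mul_of_nonneg_left hp4 hx34
  have m2 : x (Sum.inr (c,0)) (Sum.inr (c,1)) * (0.1:ℝ) ≤ x (Sum.inr (c,0)) (Sum.inr (c,1)) * 0.5 :=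
    mul_le_mul_of_nonneg_left (by norm_num) hx34
  have hkey : x (Sum.inr (c,0)) (Sum.inr (c,0)) * p (Sum.inr (c,0))
      ≤ x (Sum.inr (c,0)) (Sum.inr (c,0)) * 0.5 := by linarith
  exact le_of_mul_le_mul_left hkey hx33

lemma bk_p4_cases (hnv : 0 < nv) (E : ABEquilibrium A (redval nv mc C) α x p) (c : Fin mc) :
    p (Sum.inr (c, 1)) ≤ 0.5 ∨ p (Sum.inr (c, 0)) + p (Sum.inr (c, 1)) ≤ 0.6 := by
  classical
  by_cases hex : ∃ t : Fin 3, t ≠ 0 ∧ 0 < x (Sum.inr (c,t)) (Sum.inr (c,1))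
  · left
    obtain ⟨t, ht0, hx⟩ := hex
    exact le_of_mul_le_mul_left (bk_roi45 hnv E c t ht0) hx
  · right
    push_neg at hex
    have hx34 : x (Sum.inr (c,0)) (Sum.inr (c,1)) = 1 := by
      have hfa := E.full_alloc (Sum.inr (c,1))
      rw [Finset.sum_eq_single_of_mem (Sum.inr (c,(0:Fin 3)) : RedBidder nv mc)
        (Finset.mem_univ _) ?_] at hfa
      · exact hfa
      · intro i _ hne
        rcases eq_or_lt_of_le (E.alloc_nonneg i (Sum.inr (c,1))) with he|hx
        · exact he.symm
        · obtain ⟨t, rfl⟩ := bk_winr1 hnv E hx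
          have ht0 : t ≠ 0 := by intro hh; subst hh; exact hne rfl
          exact absurd hx (not_lt.mpr (hex t ht0))
    have hroi := bk_roi3 hnv E c
    rw [hx34, one_mul, one_mul] at hroi
    have hp3le := bk_p3_le hnv E c
    have hp30 := bk_p_nonneg E (Sum.inr (c,0) : RedGood nv mc)
    have hx0 := E.alloc_nonneg (Sum.inr (c,0) : RedBidder nv mc) (Sum.inr (c,0))
    have hx1 := E.alloc_le_one (Sum.inr (c,0) : RedBidder nv mc) (Sum.inr (c,0))
    nlinarith [mul_nonneg (show (0:ℝ) ≤ 1 - x (Sum.inr (c,0)) (Sum.inr (c,0)) by linarith)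
      (show (0:ℝ) ≤ 0.5 - p (Sum.inr (c,0)) by linarith)]

lemma bk_clause_rev (hnv : 0 < nv) (E : ABEquilibrium A (redval nv mc C) α x p) (c : Fin mc) :
    p (Sum.inr (c, 0)) + p (Sum.inr (c, 1)) ≤ 1 := by
  rcases bk_p4_cases hnv E c with h | h
  · linarith [bk_p3_le hnv E c]
  · linarith

lemma bk_clause_bad (hnv : 0 < nv) (E : ABEquilibrium A (redval nv mc C) α x p) (c : Fin mc)
    (hbad : ∀ t : Fin 3, α (Sum.inl (C c t)) ≤ 2) :
    p (Sum.inr (c, 0)) + p (Sum.inr (c, 1)) ≤ 0.7 := by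
  have hp3 : p (Sum.inr (c, 0)) ≤ 0.2 := by
    apply bk_p_le E (bk_x33_pos hnv E c) (by norm_num)
    rintro (⟨j2,b2⟩|⟨c2,t2⟩) hk
    · simp only [redval]
      split_ifs with h
      · obtain ⟨-, t, hct⟩ := h
        have hb := hbad t
        rw [hct] at hb
        have hlb := E.mult_lb (Sum.inl (j2,b2) : RedBidder nv mc)
        nlinarith
      · rw [mul_zero]; norm_num
    · simp only [redval]
      by_cases hc : c2 = c
      · subst hc
        have ht2 : t2 ≠ 0 := by intro hh; subst hh; exact hk rfl
        rw [if_pos rfl, if_neg ht2, if_neg (by norm_num : ¬(0:Fin 2) = 1), mul_zero]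
        norm_num
      · rw [if_neg hc, mul_zero]; norm_num
  rcases bk_p4_cases hnv E c with h | h
  · linarith
  · linarith [bk_p_nonneg E (Sum.inr (c,1) : RedGood nv mc), bk_p4_ge hnv E c]

lemma bk_main (hnv : 0 < nv) (E : ABEquilibrium A (redval nv mc C) α x p)
    (hR : 0.075 + (mc:ℝ) ≤ ∑ j, p j) :
    ∃ σ : Fin nv → Bool, ∀ c, ∃ t, (C c t).2 = σ (C c t).1 := by
  classical
  have hN := bk_hnN (nv := nv) hnv
  refine ⟨fun j => if 2 < α (Sum.inl (j,true)) then true else false, ?_⟩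
  by_contra hcon
  push_neg at hcon
  obtain ⟨c0, hc0⟩ := hcon
  have hbad : ∀ t : Fin 3, α (Sum.inl (C c0 t)) ≤ 2 := by
    intro t
    have h := hc0 t
    rcases hCt : C c0 t with ⟨j,b⟩
    rw [hCt] at h
    simp only at h
    cases b
    · by_cases hc : 2 < α (Sum.inl (j,true))
      · rcases bk_notboth hnv E j with h1|h2
        · linarith
        · exact h2
      · exfalso; apply h; simp [hc]
    · by_cases hc : 2 < α (Sum.inl (j,true))
      · exfalso; apply h; simp [hc]
      · exact not_lt.mp hc
  have hsplit : ∑ j : RedGood nv mc, p j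
      = (∑ z : Fin nv × Bool, p (Sum.inl z)) + ∑ g : Fin mc × Fin 2, p (Sum.inr g) :=
    Fintype.sum_sum_type _
  have hvar : ∑ z : Fin nv × Bool, p (Sum.inl z) ≤ 0.1 := by
    rw [Fintype.sum_prod_type]
    have hrow : ∀ j : Fin nv, (∑ b : Bool, p (Sum.inl (j,b))) ≤ 0.1/(nv:ℝ) := by
      intro j
      rw [Fintype.sum_bool]
      exact bk_pair hnv E j
    calc (∑ j : Fin nv, ∑ b : Bool, p (Sum.inl (j,b)))
        ≤ ∑ _j : Fin nv, 0.1/(nv:ℝ) := Finset.sum_le_sum (fun j _ => hrow j)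
      _ = (nv:ℝ) * (0.1/(nv:ℝ)) := by
          rw [Finset.sum_const, Finset.card_univ, Fintype.card_fin, nsmul_eq_mul]
      _ = 0.1 := by field_simp
  have hcls : ∑ g : Fin mc × Fin 2, p (Sum.inr g) ≤ (mc:ℝ) - 0.3 := by
    rw [Fintype.sum_prod_type]
    have hrow : ∀ c : Fin mc, (∑ g : Fin 2, p (Sum.inr (c,g)))
        ≤ (if c = c0 then (0.7:ℝ) else 1) := by
      intro c
      rw [Fin.sum_univ_two]
      by_cases hc : c = c0
      · subst hc; rw [if_pos rfl]; exact bk_clause_bad hnv E c hbad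
      · rw [if_neg hc]; exact bk_clause_rev hnv E c
    calc (∑ c : Fin mc, ∑ g : Fin 2, p (Sum.inr (c,g)))
        ≤ ∑ c : Fin mc, (if c = c0 then (0.7:ℝ) else 1) := Finset.sum_le_sum (fun c _ => hrow c)
      _ = (mc:ℝ) - 0.3 := by
          have he : ∀ c : Fin mc, (if c = c0 then (0.7:ℝ) else 1)
              = 1 + (if c = c0 then (-0.3:ℝ) else 0) := by
            intro c; split_ifs <;> norm_num
          rw [Finset.sum_congr rfl (fun c _ => he c), Finset.sum_add_distrib,
            Finset.sum_const, Finset.card_univ, Fintype.card_fin, nsmul_eq_mul,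
            Finset.sum_ite_eq' Finset.univ c0 (fun _ => (-0.3:ℝ))]
          simp
          ring
  rw [hsplit] at hR
  linarith

end Backward

/-- the reduction from 3SAT (with `n` variables and `m` clauses, clause `c`
consisting of the three literals `C c 0, C c 1, C c 2`, a literal being a variable together
with a sign) is such that the 3SAT instance is satisfiable iff the constructed market
(with `2n + 3m` bidders and `2n + 2m` goods) admits an auto-bidding equilibrium with revenue
at least `0.075 + m`. -/
theorem stmt8 (nv mc : ℕ) (hnv : 0 < nv) (C : Fin mc → Fin 3 → Fin nv × Bool)
    (A : ℝ) (hA : 5 < A) :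
    (∃ σ : Fin nv → Bool, ∀ c, ∃ t, (C c t).2 = σ (C c t).1) ↔
    (∃ (α : RedBidder nv mc → ℝ) (x : RedBidder nv mc → RedGood nv mc → ℝ)
        (p : RedGood nv mc → ℝ),
      ABEquilibrium A (redval nv mc C) α x p ∧ 0.075 + (mc : ℝ) ≤ ∑ j, p j) := by
  constructor
  · rintro ⟨σ, hσ⟩
    exact forward nv mc hnv C A hA σ hσ
  · rintro ⟨α, x, p, E, hR⟩
    exact bk_main hnv E hR
end

section
/- In the 3SAT-reduction instance, at any auto-bidding equilibrium, for each variable x_j we have min(α_{1^{x_j}}, α_{2^{x_j}}) ≤ 2: if both multipliers exceeded 2, the total price of the two variable goods 1^{x_j} and 2^{x_j} would exceed 0.1/n while their total value to the winner(s) is at most 0.1/n (being 0.075/n for winning both or 0.05/n + 0.05/n-bounded splits), so some variable bidder's ROI constraint would be violated since these bidders win no other goods profitably. -/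
/-- in the 3SAT-reduction instance, at any auto-bidding equilibrium, for each
variable `x_j` the smaller of the two variable bidders' multipliers is at most `2`. -/
theorem stmt9 (nv mc : ℕ) (hnv : 0 < nv) (C : Fin mc → Fin 3 → Fin nv × Bool)
    (A : ℝ) (hA : 1 ≤ A)
    (α : RedBidder nv mc → ℝ) (x : RedBidder nv mc → RedGood nv mc → ℝ)
    (p : RedGood nv mc → ℝ)
    (heq : ABEquilibrium A (redval nv mc C) α x p) :
    ∀ j : Fin nv, min (α (Sum.inl (j, true))) (α (Sum.inl (j, false))) ≤ 2 := by
  intro j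
  by_contra hcon
  push_neg at hcon
  rw [lt_min_iff] at hcon
  obtain ⟨h2t, h2f⟩ := hcon
  set V := redval nv mc C with hV
  set u : RedBidder nv mc := Sum.inl (j, true) with hu
  set w : RedBidder nv mc := Sum.inl (j, false) with hw
  set gT : RedGood nv mc := Sum.inl (j, true) with hgT
  set gF : RedGood nv mc := Sum.inl (j, false) with hgF
  have hnv' : (0:ℝ) < nv := by exact_mod_cast hnv
  set ε : ℝ := 0.025 / nv with hε
  have hεpos : 0 < ε := by rw [hε]; positivity
  have αpos : ∀ k, 0 < α k := fun k => lt_of_lt_of_le one_pos (heq.mult_lb k)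
  -- value computations
  have hVugT : V u gT = 2 * ε := by
    rw [hV, hu, hgT, hε]; simp [redval]; ring
  have hVwgF : V w gF = 2 * ε := by
    rw [hV, hw, hgF, hε]; simp [redval]; ring
  have hVugF : V u gF = ε := by
    rw [hV, hu, hgF, hε]; simp [redval]
  have hVwgT : V w gT = ε := by
    rw [hV, hw, hgT, hε]; simp [redval]
  -- if a bidder values a good at 0 and someone bids positively, it wins nothing
  have hx0 : ∀ (k : RedBidder nv mc) (g : RedGood nv mc) (k₀ : RedBidder nv mc),
      V k g = 0 → 0 < α k₀ * V k₀ g → x k g = 0 := by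
    intro k g k₀ hv hpos
    by_contra hx
    have hxpos : 0 < x k g := lt_of_le_of_ne (heq.alloc_nonneg k g) (Ne.symm hx)
    have h := heq.highest k g hxpos k₀
    rw [hv, mul_zero] at h
    linarith
  -- second-price lower bound
  have price_lb : ∀ (i k : RedBidder nv mc) (g : RedGood nv mc), 0 < x i g → k ≠ i →
      α k * V k g ≤ p g := by
    intro i k g hx hk
    rw [heq.second_price i g hx]
    refine le_csSup ⟨max 0 (α i * V i g), ?_⟩ (Set.mem_insert_of_mem _ ⟨k, hk, rfl⟩)
    rintro b hb
    rcases hb with rfl | ⟨k', -, rfl⟩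
    · exact le_max_left _ _
    · exact le_trans (heq.highest i g hx k') (le_max_right _ _)
  have huw : u ≠ w := by rw [hu, hw]; simp
  -- the two variable goods are fully allocated to the two variable bidders
  have hVself : ∀ b : Bool, 0 < α (Sum.inl (j, b)) * V (Sum.inl (j, b)) (Sum.inl (j, b)) := by
    intro b
    refine mul_pos (αpos _) ?_
    have e : V (Sum.inl (j, b)) (Sum.inl (j, b)) = 0.05 / nv := by
      rw [hV]; simp [redval]
    rw [e]
    exact div_pos (by norm_num) hnv'
  have hsum : ∀ b : Bool, x u (Sum.inl (j, b)) + x w (Sum.inl (j, b)) = 1 := by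
    intro b
    have h := heq.full_alloc (Sum.inl (j, b) : RedGood nv mc)
    have e : ∑ i ∈ ({u, w} : Finset (RedBidder nv mc)), x i (Sum.inl (j, b))
        = ∑ i, x i (Sum.inl (j, b)) := by
      apply Finset.sum_subset (Finset.subset_univ _)
      intro k _ hk
      simp only [Finset.mem_insert, Finset.mem_singleton, not_or] at hk
      apply hx0 k _ (Sum.inl (j, b))
      · rcases k with ⟨j', b'⟩ | ⟨c, t⟩
        · have hj : j' ≠ j := by
            rintro rfl
            cases b'
            · exact hk.2 (by rw [hw])
            · exact hk.1 (by rw [hu])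
          rw [hV]; simp [redval, hj]
        · rw [hV]; simp [redval]
      · exact hVself b
    rw [Finset.sum_pair huw] at e
    rw [e, h]
  have hsumT : x u gT + x w gT = 1 := hsum true
  have hsumF : x u gF + x w gF = 1 := hsum false
  -- price lower bounds for the two variable goods
  have hpT : 2 * ε < p gT := by
    rcases lt_or_ge 0 (x u gT) with hxu | hxu
    · have hp := price_lb u w gT hxu (Ne.symm huw)
      rw [hVwgT] at hp
      nlinarith
    · have hxw : 0 < x w gT := by
        have := heq.alloc_nonneg u gT
        have := heq.alloc_nonneg w gT
        nlinarith
      have hp := price_lb w u gT hxw huw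
      rw [hVugT] at hp
      nlinarith
  have hpF : 2 * ε < p gF := by
    rcases lt_or_ge 0 (x u gF) with hxu | hxu
    · have hp := price_lb u w gF hxu (Ne.symm huw)
      rw [hVwgF] at hp
      nlinarith
    · have hxw : 0 < x w gF := by
        have := heq.alloc_nonneg u gF
        have := heq.alloc_nonneg w gF
        nlinarith
      have hp := price_lb w u gF hxw huw
      rw [hVugF] at hp
      nlinarith
  -- ROI restricted to these two goods
  have roi' : ∀ i : RedBidder nv mc, (i = u ∨ i = w) →
      x i gT * (p gT - V i gT) + x i gF * (p gF - V i gF) ≤ 0 := by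
    intro i hi
    obtain ⟨bi, hib⟩ : ∃ bb : Bool, i = Sum.inl (j, bb) := by
      rcases hi with rfl | rfl
      · exact ⟨true, hu⟩
      · exact ⟨false, hw⟩
    have h1 : ∑ g, x i g * (p g - V i g) ≤ 0 := by
      have hr := heq.roi i
      have e : ∑ g, x i g * (p g - V i g) = ∑ g, x i g * p g - ∑ g, x i g * V i g := by
        rw [← Finset.sum_sub_distrib]
        apply Finset.sum_congr rfl
        intros; ring
      rw [e]; linarith
    have hgTF : gT ≠ gF := by rw [hgT, hgF]; simp
    have h2 : x i gT * (p gT - V i gT) + x i gF * (p gF - V i gF)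
        ≤ ∑ g, x i g * (p g - V i g) := by
      have h3 : ∑ g ∈ ({gT, gF} : Finset (RedGood nv mc)), x i g * (p g - V i g)
          ≤ ∑ g, x i g * (p g - V i g) := by
        apply Finset.sum_le_sum_of_subset_of_nonneg (Finset.subset_univ _)
        intro g _ hg
        simp only [Finset.mem_insert, Finset.mem_singleton, not_or] at hg
        rcases eq_or_lt_of_le (heq.alloc_nonneg i g) with hxg | hxg
        · rw [← hxg, zero_mul]
        · rcases g with ⟨j', b'⟩ | ⟨c, gg⟩
          · exfalso
            have hj : j ≠ j' := by
              rintro rfl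
              cases b'
              · exact hg.2 (by rw [hgF])
              · exact hg.1 (by rw [hgT])
            have hv0 : V i (Sum.inl (j', b')) = 0 := by
              rw [hib, hV]; simp [redval, hj]
            have hwv : 0 < α (Sum.inl (j', b')) * V (Sum.inl (j', b')) (Sum.inl (j', b')) := by
              refine mul_pos (αpos _) ?_
              have e : V (Sum.inl (j', b')) (Sum.inl (j', b')) = 0.05 / nv := by
                rw [hV]; simp [redval]
              rw [e]
              exact div_pos (by norm_num) hnv'
            have := hx0 i _ _ hv0 hwv
            linarith
          · fin_cases gg
            · -- clause good of type 0
              replace hxg : 0 < x i (Sum.inr (c, (0 : Fin 2))) := hxg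
              show (0:ℝ) ≤ x i (Sum.inr (c, (0 : Fin 2))) *
                (p (Sum.inr (c, (0 : Fin 2))) - V i (Sum.inr (c, (0 : Fin 2))))
              by_cases hl : ∃ t, C c t = (j, bi)
              · have hvi : V i (Sum.inr (c, 0)) = 0.1 := by
                  rw [hib, hV]; simp [redval, hl]
                have hne : (Sum.inr (c, (0 : Fin 3)) : RedBidder nv mc) ≠ i := by
                  rw [hib]; simp
                have hplb := price_lb i (Sum.inr (c, (0 : Fin 3))) (Sum.inr (c, 0)) hxg hne
                have hvc : V (Sum.inr (c, (0 : Fin 3))) (Sum.inr (c, (0 : Fin 2))) = 0.5 := by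
                  rw [hV]; simp [redval]
                rw [hvc] at hplb
                have hb05 : (0.5 : ℝ) ≤ α (Sum.inr (c, (0 : Fin 3))) * 0.5 := by
                  nlinarith [heq.mult_lb (Sum.inr (c, (0 : Fin 3)) : RedBidder nv mc)]
                rw [hvi]
                have : (0 : ℝ) ≤ p (Sum.inr (c, 0)) - 0.1 := by linarith
                exact mul_nonneg hxg.le this
              · exfalso
                have hv0 : V i (Sum.inr (c, 0)) = 0 := by
                  rw [hib, hV]; simp [redval, hl]
                have hwv : 0 < α (Sum.inr (c, (0 : Fin 3))) *
                    V (Sum.inr (c, (0 : Fin 3))) (Sum.inr (c, (0 : Fin 2))) := by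
                  refine mul_pos (αpos _) ?_
                  rw [hV]; simp [redval]; norm_num
                have := hx0 i _ _ hv0 hwv
                linarith
            · -- clause good of type 1
              replace hxg : 0 < x i (Sum.inr (c, (1 : Fin 2))) := hxg
              exfalso
              have hv0 : V i (Sum.inr (c, 1)) = 0 := by
                rw [hib, hV]; simp [redval]
              have hwv : 0 < α (Sum.inr (c, (1 : Fin 3))) *
                  V (Sum.inr (c, (1 : Fin 3))) (Sum.inr (c, (1 : Fin 2))) := by
                refine mul_pos (αpos _) ?_
                rw [hV]; simp [redval]; norm_num
              have := hx0 i _ _ hv0 hwv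
              linarith
      rwa [Finset.sum_pair hgTF] at h3
    linarith
  have rU := roi' u (Or.inl rfl)
  have rW := roi' w (Or.inr rfl)
  rw [hVugT, hVugF] at rU
  rw [hVwgT, hVwgF] at rW
  have eT : x u gT * p gT + x w gT * p gT = p gT := by linear_combination p gT * hsumT
  have eF : x u gF * p gF + x w gF * p gF = p gF := by linear_combination p gF * hsumF
  have eT2 : 2 * ε * x u gT + 2 * ε * x w gT = 2 * ε := by linear_combination (2 * ε) * hsumT
  have eF2 : 2 * ε * x u gF + 2 * ε * x w gF = 2 * ε := by linear_combination (2 * ε) * hsumF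
  have nn1 : 0 ≤ ε * x w gT := mul_nonneg hεpos.le (heq.alloc_nonneg w gT)
  have nn2 : 0 ≤ ε * x u gF := mul_nonneg hεpos.le (heq.alloc_nonneg u gF)
  linarith
end

section
/- In the 3SAT-reduction instance, at any auto-bidding equilibrium, the price of every clause good 4^c equals 0.5: bidders 4^c and 5^c both value good 4^c at 0.5 and value nothing else, so any equilibrium price below 0.5 would contradict maximal pacing for 4^c or 5^c (whoever wins pays strictly less than value, but can raise its multiplier), any price above 0.5 set by both of them violates their ROI constraints, and bidder 3^c cannot win good 4^c in whole since its total value (at most 0.5 + 0.1 = 0.6) would be exceeded by its payment. -/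
section Aux
variable {nv mc : ℕ} (C : Fin mc → Fin 3 → Fin nv × Bool) (c : Fin mc)

lemma redval_hi (t : Fin 3) (ht : t ≠ 0) (j : RedGood nv mc) :
    redval nv mc C (Sum.inr (c, t)) j = if j = Sum.inr (c, 1) then 0.5 else 0 := by
  rcases j with ⟨jv, b⟩ | ⟨c', g⟩
  · simp [redval]
  · rcases eq_or_ne c c' with rfl | hc
    · fin_cases g <;> simp [redval, ht]
    · simp [redval, hc, Ne.symm hc]

lemma redval_B0 (j : RedGood nv mc) :
    redval nv mc C (Sum.inr (c, 0)) j =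
      if j = Sum.inr (c, 0) then 0.5 else if j = Sum.inr (c, 1) then 0.1 else 0 := by
  rcases j with ⟨jv, b⟩ | ⟨c', g⟩
  · simp [redval]
  · rcases eq_or_ne c c' with rfl | hc
    · fin_cases g <;> simp [redval]
    · simp [redval, hc, Ne.symm hc]

lemma redval_atJ (i : RedBidder nv mc) :
    redval nv mc C i (Sum.inr (c, 1)) =
      if i = Sum.inr (c, 0) then 0.1 else
      if i = Sum.inr (c, 1) then 0.5 else
      if i = Sum.inr (c, 2) then 0.5 else 0 := by
  rcases i with ⟨jv, b⟩ | ⟨c', t⟩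
  · simp [redval]
  · rcases eq_or_ne c' c with rfl | hc
    · fin_cases t <;> simp [redval]
    · simp [redval, hc, Ne.symm hc]

lemma redval_lit : redval nv mc C (Sum.inl (C c 0)) (Sum.inr (c, 0)) = 0.1 := by
  simp [redval]

lemma redval_exists_pos (hnv : 0 < nv) (j : RedGood nv mc) :
    ∃ k, 0 < redval nv mc C k j := by
  rcases j with ⟨jv, b⟩ | ⟨c', g⟩
  · exact ⟨Sum.inl (jv, b), by simp [redval]; positivity⟩
  · fin_cases g
    · exact ⟨Sum.inr (c', 0), by norm_num [redval]⟩
    · exact ⟨Sum.inr (c', 1), by norm_num [redval]⟩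

end Aux

/-- in the 3SAT-reduction instance, at any auto-bidding equilibrium, the price
of every clause good `4^c` equals `0.5`. -/
theorem stmt10 (nv mc : ℕ) (hnv : 0 < nv) (C : Fin mc → Fin 3 → Fin nv × Bool)
    (A : ℝ) (hA : 1 ≤ A)
    (α : RedBidder nv mc → ℝ) (x : RedBidder nv mc → RedGood nv mc → ℝ)
    (p : RedGood nv mc → ℝ)
    (heq : ABEquilibrium A (redval nv mc C) α x p) :
    ∀ c : Fin mc, p (Sum.inr (c, 1)) = 0.5 := by
  intro c
  have hα : ∀ i, (0:ℝ) < α i := fun i => lt_of_lt_of_le one_pos (heq.mult_lb i)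
  set v : RedBidder nv mc → RedGood nv mc → ℝ := redval nv mc C with hv
  -- every good has a winner
  have hwin : ∀ j, ∃ i, 0 < x i j := by
    intro j
    by_contra h
    push_neg at h
    have : ∑ i, x i j ≤ 0 := Finset.sum_nonpos (fun i _ => h i)
    rw [heq.full_alloc j] at this; linarith
  -- bounded above
  have hbdd : ∀ (i : RedBidder nv mc) (j : RedGood nv mc),
      BddAbove (insert 0 {b | ∃ k, k ≠ i ∧ b = α k * v k j}) := by
    intro i j
    apply Set.Finite.bddAbove
    apply Set.Finite.insert
    apply Set.Finite.subset (Set.finite_range (fun k => α k * v k j))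
    rintro b ⟨k, _, rfl⟩; exact ⟨k, rfl⟩
  -- losers' bids lower bound the price
  have hple : ∀ i j, 0 < x i j → ∀ k, k ≠ i → α k * v k j ≤ p j := by
    intro i j hx k hk
    rw [heq.second_price i j hx]
    exact le_csSup (hbdd i j) (Set.mem_insert_iff.2 (Or.inr ⟨k, hk, rfl⟩))
  -- prices are nonnegative
  have hpnn : ∀ j, 0 ≤ p j := by
    intro j
    obtain ⟨i, hi⟩ := hwin j
    rw [heq.second_price i j hi]
    exact le_csSup (hbdd i j) (Set.mem_insert 0 _)
  -- only bidders with positive value can win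
  have hposval : ∀ i j, 0 < x i j → 0 < v i j := by
    intro i j hx
    obtain ⟨k, hk⟩ := redval_exists_pos C hnv j
    have h1 : α k * v k j ≤ α i * v i j := heq.highest i j hx k
    have h2 : 0 < α k * v k j := mul_pos (hα k) hk
    nlinarith [hα i]
  -- Step A : 0.5 ≤ p J
  have hgeq : (0.5:ℝ) ≤ p (Sum.inr (c, 1)) := by
    obtain ⟨i, hi⟩ := hwin (Sum.inr (c, 1))
    rcases ne_or_eq i (Sum.inr (c, 1)) with hne | rfl
    · have := hple i _ hi (Sum.inr (c, 1)) (Ne.symm hne)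
      rw [hv, redval_atJ C c] at this
      simp at this
      nlinarith [heq.mult_lb (Sum.inr (c, (1:Fin 3)) : RedBidder nv mc)]
    · have := hple _ _ hi (Sum.inr (c, 2)) (by simp)
      rw [hv, redval_atJ C c] at this
      simp at this
      nlinarith [heq.mult_lb (Sum.inr (c, (2:Fin 3)) : RedBidder nv mc)]
  -- Step B : p J ≤ 0.5
  by_contra hne0
  have hgt : (0.5:ℝ) < p (Sum.inr (c, 1)) := lt_of_le_of_ne hgeq (Ne.symm hne0)
  clear hne0
  -- a high bidder (t ≠ 0) cannot win good J
  have hnowin : ∀ t : Fin 3, t ≠ 0 → x (Sum.inr (c, t)) (Sum.inr (c, 1)) = 0 := by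
    intro t ht
    by_contra hxne
    have hx : 0 < x (Sum.inr (c, t)) (Sum.inr (c, 1)) :=
      lt_of_le_of_ne (heq.alloc_nonneg _ _) (Ne.symm hxne)
    have hroi := heq.roi (Sum.inr (c, t))
    have hval : ∑ j, x (Sum.inr (c, t)) j * v (Sum.inr (c, t)) j
        = x (Sum.inr (c, t)) (Sum.inr (c, 1)) * 0.5 := by
      rw [Finset.sum_eq_single (Sum.inr (c, 1))
          (fun j _ hj => by rw [hv, redval_hi C c t ht, if_neg hj, mul_zero])
          (fun h => absurd (Finset.mem_univ _) h), hv, redval_hi C c t ht, if_pos rfl]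
    have hlow : x (Sum.inr (c, t)) (Sum.inr (c, 1)) * p (Sum.inr (c, 1))
        ≤ ∑ j, x (Sum.inr (c, t)) j * p j := by
      apply Finset.single_le_sum (f := fun j => x (Sum.inr (c, t)) j * p j)
        (fun j _ => mul_nonneg (heq.alloc_nonneg _ _) (hpnn j)) (Finset.mem_univ _)
    rw [hval] at hroi
    nlinarith
  -- bidders outside the clause gadget cannot win good J
  have hout : ∀ i, i ≠ Sum.inr (c, 0) → x i (Sum.inr (c, 1)) = 0 := by
    intro i hi0
    rcases ne_or_eq i (Sum.inr (c, 1)) with h1 | rfl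
    · rcases ne_or_eq i (Sum.inr (c, 2)) with h2 | rfl
      · by_contra hxne
        have hx : 0 < x i (Sum.inr (c, 1)) :=
          lt_of_le_of_ne (heq.alloc_nonneg _ _) (Ne.symm hxne)
        have := hposval i _ hx
        rw [hv, redval_atJ C c, if_neg hi0, if_neg h1, if_neg h2] at this
        simp at this
      · exact hnowin 2 (by decide)
    · exact hnowin 1 (by decide)
  -- hence bidder B0 wins all of good J
  have hB0 : x (Sum.inr (c, 0)) (Sum.inr (c, 1)) = 1 := by
    have := heq.full_alloc (Sum.inr (c, 1))
    rwa [Finset.sum_eq_single (Sum.inr (c, 0)) (fun i _ hi => hout i hi)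
      (fun h => absurd (Finset.mem_univ _) h)] at this
  -- ROI for B0
  have hroi := heq.roi (Sum.inr (c, 0))
  have hval : ∑ j, x (Sum.inr (c, 0)) j * v (Sum.inr (c, 0)) j
      = x (Sum.inr (c, 0)) (Sum.inr (c, 0)) * 0.5
        + x (Sum.inr (c, 0)) (Sum.inr (c, 1)) * 0.1 := by
    have hfun : ∀ j, x (Sum.inr (c, 0)) j * v (Sum.inr (c, 0)) j
        = (if j = Sum.inr (c, 0) then x (Sum.inr (c, 0)) j * 0.5 else 0)
          + (if j = Sum.inr (c, 1) then x (Sum.inr (c, 0)) j * 0.1 else 0) := by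
      intro j
      rw [hv, redval_B0 C c]
      by_cases h0 : j = Sum.inr (c, 0)
      · subst h0; norm_num
      · by_cases h1 : j = Sum.inr (c, 1)
        · subst h1; norm_num
        · simp [h0, h1]
    rw [Finset.sum_congr rfl (fun j _ => hfun j), Finset.sum_add_distrib,
      Finset.sum_ite_eq' Finset.univ, Finset.sum_ite_eq' Finset.univ]
    simp
  have hlow : x (Sum.inr (c, 0)) (Sum.inr (c, 0)) * p (Sum.inr (c, 0))
      + x (Sum.inr (c, 0)) (Sum.inr (c, 1)) * p (Sum.inr (c, 1))
      ≤ ∑ j, x (Sum.inr (c, 0)) j * p j := by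
    have hpair : ({Sum.inr (c, 0), Sum.inr (c, 1)} : Finset (RedGood nv mc)) ⊆
        Finset.univ := Finset.subset_univ _
    have := Finset.sum_le_sum_of_subset_of_nonneg
      (f := fun j => x (Sum.inr (c, 0)) j * p j) hpair
      (fun j _ _ => mul_nonneg (heq.alloc_nonneg _ _) (hpnn j))
    rwa [Finset.sum_pair (by simp : (Sum.inr (c, 0) : RedGood nv mc) ≠ Sum.inr (c, 1))]
      at this
  rw [hval] at hroi
  have hkey : x (Sum.inr (c, 0)) (Sum.inr (c, 0)) * p (Sum.inr (c, 0))
      + p (Sum.inr (c, 1))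
      ≤ x (Sum.inr (c, 0)) (Sum.inr (c, 0)) * 0.5 + 0.1 := by
    rw [hB0] at hlow hroi
    nlinarith
  rcases eq_or_lt_of_le (heq.alloc_nonneg (Sum.inr (c, 0)) (Sum.inr (c, 0))) with hz | hz
  · rw [← hz] at hkey; nlinarith
  · -- B0 wins part of G0, so p G0 ≥ 0.1 via the literal bidder's bid
    have hlitbid := hple (Sum.inr (c, 0)) (Sum.inr (c, 0)) hz (Sum.inl (C c 0)) (by simp)
    rw [hv, redval_lit C c] at hlitbid
    have hpg : (0.1:ℝ) ≤ p (Sum.inr (c, 0)) := by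
      nlinarith [heq.mult_lb (Sum.inl (C c 0) : RedBidder nv mc)]
    have hxg1 : x (Sum.inr (c, 0)) (Sum.inr (c, 0)) ≤ 1 := heq.alloc_le_one _ _
    nlinarith [mul_nonneg hz.le (sub_nonneg.2 hpg)]
end

section
/- For an ROI-constrained value maximizer in second price auctions, there always exists an optimal uniform-multiplier (multiplicative pacing) solution: fixing the prices p_j ≥ 0 set by opponents and allowing fractional wins, the linear program maximize ∑_j x_j v_j subject to ∑_j x_j p_j ≤ ∑_j x_j v_j and 0 ≤ x_j ≤ 1 admits an optimal solution of threshold form — there is a multiplier α ≥ 1 such that x_j = 1 whenever α v_j > p_j, x_j = 0 whenever α v_j < p_j, and x_j is arbitrary (fractional) on ties α v_j = p_j, with at most one good fractionally allocated. -/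
open Finset

lemma fill_lemma {m : ℕ} (S : Finset (Fin m)) (c : Fin m → ℝ) :
    ∀ B : ℝ, (∀ j ∈ S, 0 < c j) → 0 ≤ B → B ≤ ∑ j ∈ S, c j →
    ∃ z : Fin m → ℝ, (∀ j, 0 ≤ z j ∧ z j ≤ 1) ∧ (∀ j, j ∉ S → z j = 0) ∧
      (∑ j ∈ S, z j * c j = B) ∧
      (∀ j k, 0 < z j → z j < 1 → 0 < z k → z k < 1 → j = k) := by
  classical
  induction S using Finset.induction_on with
  | empty =>
      intro B _ hB0 hB
      refine ⟨fun _ => 0, by simp, by simp, ?_, by simp⟩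
      simp only [Finset.sum_empty] at hB ⊢
      linarith
  | @insert a S ha ih =>
      intro B hc hB0 hB
      have hca : 0 < c a := hc a (mem_insert_self a S)
      have hcS : ∀ j ∈ S, 0 < c j := fun j hj => hc j (mem_insert_of_mem hj)
      by_cases hcase : B ≤ c a
      · refine ⟨fun j => if j = a then B / c a else 0, ?_, ?_, ?_, ?_⟩
        · intro j
          by_cases h : j = a <;> simp only [h, if_pos, if_neg, ite_true, ite_false]
          · constructor
            · positivity
            · exact div_le_one_of_le₀ hcase hca.le
          · simp [h]
        · intro j hj
          have : j ≠ a := fun h => hj (h ▸ mem_insert_self a S)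
          simp [this]
        · rw [Finset.sum_insert ha]
          simp only [if_pos rfl]
          have h0 : ∑ j ∈ S, (if j = a then B / c a else 0) * c j = 0 := by
            apply Finset.sum_eq_zero
            intro j hj
            have : j ≠ a := by rintro rfl; exact ha hj
            simp [this]
          rw [h0]; simp; exact div_mul_cancel₀ _ hca.ne'
        · intro j k hj1 hj2 hk1 hk2
          by_cases h1 : j = a
          · by_cases h2 : k = a
            · rw [h1, h2]
            · simp [h2] at hk1
          · simp [h1] at hj1
      · push_neg at hcase
        have hB' : 0 ≤ B - c a := by linarith
        have hB2 : B - c a ≤ ∑ j ∈ S, c j := by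
          rw [Finset.sum_insert ha] at hB; linarith
        obtain ⟨z, hz01, hz0, hzsum, hzfrac⟩ := ih (B - c a) hcS hB' hB2
        refine ⟨Function.update z a 1, ?_, ?_, ?_, ?_⟩
        · intro j
          by_cases h : j = a
          · subst h; simp [Function.update_self]
          · rw [Function.update_of_ne h]; exact hz01 j
        · intro j hj
          have h1 : j ≠ a := fun h => hj (h ▸ mem_insert_self a S)
          have h2 : j ∉ S := fun h => hj (mem_insert_of_mem h)
          rw [Function.update_of_ne h1]; exact hz0 j h2
        · rw [Finset.sum_insert ha]
          have h1 : Function.update z a 1 a = (1:ℝ) := Function.update_self a 1 z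
          have h2 : ∑ j ∈ S, Function.update z a 1 j * c j = ∑ j ∈ S, z j * c j := by
            apply Finset.sum_congr rfl
            intro j hj
            have : j ≠ a := by rintro rfl; exact ha hj
            rw [Function.update_of_ne this]
          rw [h1, h2, hzsum]; ring
        · intro j k hj1 hj2 hk1 hk2
          have hja : j ≠ a := by rintro rfl; rw [Function.update_self] at hj2; linarith
          have hka : k ≠ a := by rintro rfl; rw [Function.update_self] at hk2; linarith
          rw [Function.update_of_ne hja] at hj1 hj2
          rw [Function.update_of_ne hka] at hk1 hk2
          exact hzfrac j k hj1 hj2 hk1 hk2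

/-- for an ROI-constrained value maximizer facing exogenous second prices,
the LP `max ∑_j x_j v_j` s.t. `∑_j x_j p_j ≤ ∑_j x_j v_j`, `0 ≤ x_j ≤ 1` admits an optimal
solution of threshold (multiplicative pacing) form: there is a multiplier `α ≥ 1` with
`x_j = 1` whenever `α v_j > p_j`, `x_j = 0` whenever `α v_j < p_j`, and at most one good
fractionally allocated. -/
theorem stmt12 {m : ℕ} (v p : Fin m → ℝ) (hv : ∀ j, 0 ≤ v j) (hp : ∀ j, 0 ≤ p j) :
    ∃ (x : Fin m → ℝ) (α : ℝ), 1 ≤ α ∧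
      (∀ j, 0 ≤ x j ∧ x j ≤ 1) ∧
      (∑ j, x j * p j ≤ ∑ j, x j * v j) ∧
      (∀ y : Fin m → ℝ, (∀ j, 0 ≤ y j ∧ y j ≤ 1) →
        (∑ j, y j * p j ≤ ∑ j, y j * v j) →
        ∑ j, y j * v j ≤ ∑ j, x j * v j) ∧
      (∀ j, p j < α * v j → x j = 1) ∧
      (∀ j, α * v j < p j → x j = 0) ∧
      (∀ j k, 0 < x j → x j < 1 → 0 < x k → x k < 1 → j = k) := by
  classical
  set T : Finset (Fin m) := univ.filter (fun j => 0 < v j) with hTdef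
  have hmemT : ∀ j, j ∈ T ↔ 0 < v j := by intro j; simp [hTdef]
  by_cases hcase : 0 ≤ ∑ j ∈ T, (v j - p j)
  · -- nonbinding case: take everything with positive value
    set α : ℝ := 1 + ∑ j ∈ T, p j / v j with hαdef
    have hsum0 : 0 ≤ ∑ j ∈ T, p j / v j :=
      Finset.sum_nonneg fun j _ => div_nonneg (hp j) (hv j)
    have hα1 : 1 ≤ α := by simp only [hαdef]; linarith
    have hαpos : 0 < α := by linarith
    set x : Fin m → ℝ := fun j => if 0 < v j then 1 else 0 with hxdef
    have hxw : ∀ w : Fin m → ℝ, ∑ j, x j * w j = ∑ j ∈ T, w j := by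
      intro w
      rw [Finset.sum_filter]
      apply Finset.sum_congr rfl
      intro j _
      by_cases h : 0 < v j <;> simp [hxdef, h]
    have hrle : ∀ j, 0 < v j → p j ≤ α * v j := by
      intro j hj
      have h1 : p j / v j ≤ ∑ k ∈ T, p k / v k :=
        Finset.single_le_sum (fun k _ => div_nonneg (hp k) (hv k)) ((hmemT j).2 hj)
      have h2 : p j / v j ≤ α := by simp only [hαdef]; linarith
      calc p j = (p j / v j) * v j := by field_simp
        _ ≤ α * v j := mul_le_mul_of_nonneg_right h2 (hv j)
    refine ⟨x, α, hα1, ?_, ?_, ?_, ?_, ?_, ?_⟩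
    · intro j; by_cases h : 0 < v j <;> simp [hxdef, h]
    · rw [hxw p, hxw v]
      rw [Finset.sum_sub_distrib] at hcase
      linarith
    · intro y hy01 _
      rw [hxw v]
      calc ∑ j, y j * v j ≤ ∑ j, x j * v j := by
            apply Finset.sum_le_sum
            intro j _
            by_cases h : 0 < v j
            · simp only [hxdef, if_pos h, one_mul]
              exact mul_le_of_le_one_left (hv j) (hy01 j).2
            · have hv0 : v j = 0 := le_antisymm (not_lt.1 h) (hv j)
              simp [hv0]
        _ = ∑ j ∈ T, v j := hxw v
    · intro j hj
      have hvj : 0 < v j := by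
        by_contra h
        have : v j = 0 := le_antisymm (not_lt.1 h) (hv j)
        rw [this, mul_zero] at hj
        exact absurd hj (not_lt.2 (hp j))
      simp [hxdef, hvj]
    · intro j hj
      by_cases h : 0 < v j
      · exact absurd hj (not_lt.2 (hrle j h))
      · simp [hxdef, h]
    · intro j k hj1 hj2 _ _
      exfalso
      by_cases h : 0 < v j <;> simp [hxdef, h] at hj1 hj2 <;> linarith
  · push_neg at hcase
    have hj0 : ∃ j ∈ T, v j - p j < 0 := by
      by_contra h
      push_neg at h
      exact absurd (Finset.sum_nonneg h) (not_le.2 hcase)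
    obtain ⟨j0, hj0T, hj0n⟩ := hj0
    have hvj0 : 0 < v j0 := (hmemT j0).1 hj0T
    set ratios : Finset ℝ := T.image (fun j => p j / v j) with hRdef
    have hRne : ratios.Nonempty := ⟨p j0 / v j0, Finset.mem_image_of_mem _ hj0T⟩
    have hrmem : ∀ j, 0 < v j → p j / v j ∈ ratios := fun j hj =>
      Finset.mem_image_of_mem _ ((hmemT j).2 hj)
    set E : ℝ → ℝ := fun c => ∑ j ∈ univ.filter (fun j => 0 < v j ∧ p j ≤ c * v j), (v j - p j)
      with hEdef
    set C : Finset ℝ := ratios.filter (fun c => 1 ≤ c ∧ E c < 0) with hCdef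
    have hCne : C.Nonempty := by
      refine ⟨ratios.max' hRne, Finset.mem_filter.2 ⟨ratios.max'_mem hRne, ?_, ?_⟩⟩
      · have h1 : 1 < p j0 / v j0 := (one_lt_div hvj0).2 (by linarith)
        have h2 : p j0 / v j0 ≤ ratios.max' hRne :=
          Finset.le_max' ratios (p j0 / v j0) (hrmem j0 hvj0)
        linarith
      · have hfull : univ.filter (fun j => 0 < v j ∧ p j ≤ ratios.max' hRne * v j) = T := by
          apply Finset.ext
          intro j
          simp only [Finset.mem_filter, Finset.mem_univ, true_and, hmemT]
          constructor
          · exact fun h => h.1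
          · intro h
            refine ⟨h, ?_⟩
            have h2 : p j / v j ≤ ratios.max' hRne :=
              Finset.le_max' ratios (p j / v j) (hrmem j h)
            calc p j = (p j / v j) * v j := by field_simp
              _ ≤ ratios.max' hRne * v j := mul_le_mul_of_nonneg_right h2 (hv j)
        simp only [hEdef, hfull]
        exact hcase
    set c : ℝ := C.min' hCne with hcdef
    have hcC : c ∈ C := C.min'_mem hCne
    obtain ⟨hcR, hc1, hcE⟩ := Finset.mem_filter.1 hcC
    -- c > 1
    have hcgt1 : 1 < c := by
      rcases lt_or_eq_of_le hc1 with h | h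
      · exact h
      · exfalso
        have : 0 ≤ E c := by
          apply Finset.sum_nonneg
          intro j hj
          obtain ⟨hvp, hle⟩ := (Finset.mem_filter.1 hj).2
          have : c * v j ≤ v j := by
            nlinarith [hv j]
          linarith
        linarith
    -- threshold sets
    set A : Finset (Fin m) := univ.filter (fun j => 0 < v j ∧ p j < c * v j) with hAdef
    set S : Finset (Fin m) := univ.filter (fun j => 0 < v j ∧ p j = c * v j) with hSdef
    have hmemA : ∀ j, j ∈ A ↔ 0 < v j ∧ p j < c * v j := by intro j; simp [hAdef]
    have hmemS : ∀ j, j ∈ S ↔ 0 < v j ∧ p j = c * v j := by intro j; simp [hSdef]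
    -- split E c
    have hsplit : E c = ∑ j ∈ A, (v j - p j) + ∑ j ∈ S, (v j - p j) := by
      have h1 : A = (univ.filter (fun j => 0 < v j ∧ p j ≤ c * v j)).filter
          (fun j => p j < c * v j) := by
        apply Finset.ext; intro j
        simp only [Finset.mem_filter, Finset.mem_univ, true_and, hmemA]
        constructor
        · exact fun h => ⟨⟨h.1, h.2.le⟩, h.2⟩
        · exact fun h => ⟨h.1.1, h.2⟩
      have h2 : S = (univ.filter (fun j => 0 < v j ∧ p j ≤ c * v j)).filter
          (fun j => ¬ p j < c * v j) := by
        apply Finset.ext; intro j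
        simp only [Finset.mem_filter, Finset.mem_univ, true_and, hmemS]
        constructor
        · exact fun h => ⟨⟨h.1, h.2.le⟩, by rw [h.2]; exact lt_irrefl _⟩
        · exact fun h => ⟨h.1.1, le_antisymm h.1.2 (not_lt.1 h.2)⟩
      rw [h1, h2, Finset.sum_filter_add_sum_filter_not]
    -- D ≥ 0
    set D : ℝ := ∑ j ∈ A, (v j - p j) with hDdef
    have hD0 : 0 ≤ D := by
      set C' : Finset ℝ := ratios.filter (fun r => 1 ≤ r ∧ r < c) with hC'def
      by_cases hC' : C'.Nonempty
      · set c' : ℝ := C'.max' hC' with hc'def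
        obtain ⟨hc'R, hc'1, hc'lt⟩ := Finset.mem_filter.1 (C'.max'_mem hC')
        have hc'E : 0 ≤ E c' := by
          by_contra h
          push_neg at h
          have : c' ∈ C := Finset.mem_filter.2 ⟨hc'R, hc'1, h⟩
          have := C.min'_le c' this
          linarith
        have hAeq : A = univ.filter (fun j => 0 < v j ∧ p j ≤ c' * v j) := by
          apply Finset.ext; intro j
          simp only [Finset.mem_filter, Finset.mem_univ, true_and, hmemA]
          constructor
          · rintro ⟨hvj, hlt⟩
            refine ⟨hvj, ?_⟩
            have hrlt : p j / v j < c := (div_lt_iff₀ hvj).2 hlt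
            have hrle : p j / v j ≤ c' := by
              by_cases h1 : 1 ≤ p j / v j
              · exact Finset.le_max' _ _ (Finset.mem_filter.2 ⟨hrmem j hvj, h1, hrlt⟩)
              · push_neg at h1; linarith
            calc p j = (p j / v j) * v j := by field_simp
              _ ≤ c' * v j := mul_le_mul_of_nonneg_right hrle (hv j)
          · rintro ⟨hvj, hle⟩
            refine ⟨hvj, lt_of_le_of_lt hle ?_⟩
            exact mul_lt_mul_of_pos_right hc'lt hvj
        rw [hDdef, hAeq]
        exact hc'E
      · apply Finset.sum_nonneg
        intro j hj
        obtain ⟨hvj, hlt⟩ := (hmemA j).1 hj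
        have hr1 : p j / v j < 1 := by
          by_contra h
          push_neg at h
          have hrlt : p j / v j < c := (div_lt_iff₀ hvj).2 hlt
          exact hC' ⟨p j / v j, Finset.mem_filter.2 ⟨hrmem j hvj, h, hrlt⟩⟩
        have : p j < v j := by
          have := (div_lt_one hvj).1 hr1
          linarith
        linarith
    -- costs on S are positive
    have hScost : ∀ j ∈ S, 0 < p j - v j := by
      intro j hj
      obtain ⟨hvj, heq⟩ := (hmemS j).1 hj
      nlinarith
    -- D ≤ total cost of S
    have hDle : D ≤ ∑ j ∈ S, (p j - v j) := by
      have h1 : ∑ j ∈ S, (p j - v j) = ∑ j ∈ S, p j - ∑ j ∈ S, v j := Finset.sum_sub_distrib p v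
      have h2 : ∑ j ∈ S, (v j - p j) = ∑ j ∈ S, v j - ∑ j ∈ S, p j := Finset.sum_sub_distrib v p
      have := hcE
      rw [hsplit] at this
      linarith
    obtain ⟨z, hz01, hz0, hzsum, hzfrac⟩ :=
      fill_lemma S (fun j => p j - v j) D hScost hD0 hDle
    -- the solution
    set x : Fin m → ℝ := fun j => if 0 < v j ∧ p j < c * v j then 1 else z j with hxdef
    have hxS : ∀ j ∈ S, x j = z j := by
      intro j hj
      obtain ⟨hvj, heq⟩ := (hmemS j).1 hj
      have : ¬ (0 < v j ∧ p j < c * v j) := by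
        rintro ⟨_, hlt⟩; rw [heq] at hlt; exact lt_irrefl _ hlt
      simp [hxdef, this]
    have hxw : ∀ w : Fin m → ℝ, ∑ j, x j * w j = ∑ j ∈ A, w j + ∑ j ∈ S, z j * w j := by
      intro w
      rw [← Finset.sum_filter_add_sum_filter_not univ (fun j => 0 < v j ∧ p j < c * v j)
        (fun j => x j * w j)]
      congr 1
      · rw [hAdef]
        apply Finset.sum_congr rfl
        intro j hj
        obtain ⟨_, h⟩ := Finset.mem_filter.1 hj
        simp [hxdef, h]
      · have hsub : S ⊆ univ.filter (fun j => ¬ (0 < v j ∧ p j < c * v j)) := by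
          intro j hj
          obtain ⟨hvj, heq⟩ := (hmemS j).1 hj
          simp only [Finset.mem_filter, Finset.mem_univ, true_and]
          rintro ⟨_, hlt⟩; rw [heq] at hlt; exact lt_irrefl _ hlt
        rw [← Finset.sum_subset hsub ?h]
        · apply Finset.sum_congr rfl
          intro j hj
          rw [hxS j hj]
        · intro j hj hjS
          have hnP : ¬ (0 < v j ∧ p j < c * v j) := (Finset.mem_filter.1 hj).2
          simp [hxdef, if_neg hnP, hz0 j hjS]
    -- balance: sum x v = sum x p
    have hbal : ∑ j, x j * v j = ∑ j, x j * p j := by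
      rw [hxw v, hxw p]
      have e1 : ∑ j ∈ S, z j * (p j - v j) = ∑ j ∈ S, z j * p j - ∑ j ∈ S, z j * v j := by
        rw [← Finset.sum_sub_distrib]
        exact Finset.sum_congr rfl fun j _ => by ring
      have e2 : D = ∑ j ∈ A, v j - ∑ j ∈ A, p j := by
        rw [hDdef]; exact Finset.sum_sub_distrib v p
      rw [hzsum] at e1
      linarith
    -- multiplier
    set lam : ℝ := 1 / (c - 1) with hlamdef
    have hlam : 0 < lam := by
      apply div_pos one_pos; linarith
    have hlamc : lam * (c - 1) = 1 := by
      rw [hlamdef]; exact one_div_mul_cancel (by linarith : c - 1 ≠ 0)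
    have expand : ∀ w : Fin m → ℝ,
        ∑ j, w j * (c * v j - p j) = c * (∑ j, w j * v j) - ∑ j, w j * p j := by
      intro w
      rw [Finset.mul_sum, ← Finset.sum_sub_distrib]
      exact Finset.sum_congr rfl fun j _ => by ring
    -- termwise
    have key : ∀ y : Fin m → ℝ, (∀ j, 0 ≤ y j ∧ y j ≤ 1) →
        ∀ j, y j * (c * v j - p j) ≤ x j * (c * v j - p j) := by
      intro y hy j
      rcases lt_trichotomy (c * v j - p j) 0 with h | h | h
      · have hxj : x j = 0 := by
          have h1 : ¬ (0 < v j ∧ p j < c * v j) := by rintro ⟨_, h2⟩; linarith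
          have h2 : j ∉ S := by
            intro hj
            obtain ⟨_, heq⟩ := (hmemS j).1 hj
            rw [heq] at h; linarith
          simp only [hxdef, if_neg h1]
          exact hz0 j h2
        rw [hxj, zero_mul]
        exact mul_nonpos_of_nonneg_of_nonpos (hy j).1 h.le
      · rw [sub_eq_zero.1 h]; ring_nf; exact le_refl _
      · have hvj : 0 < v j := by
          by_contra hvc
          have : v j = 0 := le_antisymm (not_lt.1 hvc) (hv j)
          rw [this, mul_zero] at h
          have := hp j; linarith
        have hxj : x j = 1 := by simp [hxdef, hvj, show p j < c * v j by linarith]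
        rw [hxj, one_mul]
        exact mul_le_of_le_one_left h.le (hy j).2
    refine ⟨x, c, hc1, ?_, ?_, ?_, ?_, ?_, ?_⟩
    · intro j
      by_cases h : 0 < v j ∧ p j < c * v j
      · simp [hxdef, h]
      · simp only [hxdef, if_neg h]; exact hz01 j
    · rw [hbal]
    · intro y hy01 hyfeas
      have h1 : ∑ j, y j * v j + lam * (∑ j, y j * v j - ∑ j, y j * p j)
          = lam * ∑ j, y j * (c * v j - p j) := by
        rw [expand y]
        have hlc : lam * c = 1 + lam := by linarith [hlamc]; 
        linear_combination (-(∑ j : Fin m, y j * v j)) * hlc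
      have h2 : lam * ∑ j, y j * (c * v j - p j) ≤ lam * ∑ j, x j * (c * v j - p j) :=
        mul_le_mul_of_nonneg_left (Finset.sum_le_sum fun j _ => key y hy01 j) hlam.le
      have h3 : lam * ∑ j, x j * (c * v j - p j) = ∑ j, x j * v j := by
        rw [expand x, ← hbal]
        linear_combination (∑ j : Fin m, x j * v j) * hlamc
      have h4 : 0 ≤ lam * (∑ j, y j * v j - ∑ j, y j * p j) :=
        mul_nonneg hlam.le (by linarith)
      linarith
    · intro j hj
      have hvj : 0 < v j := by
        by_contra h
        have : v j = 0 := le_antisymm (not_lt.1 h) (hv j)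
        rw [this, mul_zero] at hj
        exact absurd hj (not_lt.2 (hp j))
      simp [hxdef, hvj, hj]
    · intro j hj
      have h1 : ¬ (0 < v j ∧ p j < c * v j) := by rintro ⟨_, h2⟩; linarith
      have h2 : j ∉ S := by
        intro h
        obtain ⟨_, heq⟩ := (hmemS j).1 h
        rw [heq] at hj; exact lt_irrefl _ hj
      simp only [hxdef, if_neg h1]
      exact hz0 j h2
    · intro j k hj1 hj2 hk1 hk2
      have hj : x j = z j := by
        by_cases h : 0 < v j ∧ p j < c * v j
        · simp [hxdef, h] at hj2
        · simp [hxdef, h]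
      have hk : x k = z k := by
        by_cases h : 0 < v k ∧ p k < c * v k
        · simp [hxdef, h] at hk2
        · simp [hxdef, h]
      rw [hj] at hj1 hj2
      rw [hk] at hk1 hk2
      exact hzfrac j k hj1 hj2 hk1 hk2
end
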